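/- arXiv:2604.12065 — 9 statements merged into one kernel-verified Lean document; each statement's English description precedes it below -/
import Mathlib

section
/- Let (s_k) be a sequence of nonnegative real numbers, C > 0 and α > -1 constants, such that s_{k+1} ≤ s_k - C·s_{k+1}^{α+2} for all k ≥ 0. Then there exists a positive constant M (depending on α, C, and s_0) such that s_k ≤ M/(k+1)^{1/(α+1)} for all k ≥ 0. -/
set_option maxHeartbeats 1000000 in
/-- Discrete decay lemma (Ammari–Tucsnak): if a nonnegative sequence satisfies
`s (k+1) ≤ s k - C * s (k+1) ^ (α + 2)` with `C > 0` and `α > -1`, then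
`s k ≤ M / (k+1) ^ (1/(α+1))` for some `M > 0`. -/
theorem stmt_0 (s : ℕ → ℝ) (C α : ℝ) (hC : 0 < C) (hα : -1 < α)
    (hs : ∀ k, 0 ≤ s k)
    (hrec : ∀ k, s (k + 1) ≤ s k - C * s (k + 1) ^ (α + 2)) :
    ∃ M > 0, ∀ k : ℕ, s k ≤ M / ((k : ℝ) + 1) ^ (1 / (α + 1)) := by
  have hα1 : (0:ℝ) < α + 1 := by linarith
  have hα1ne : α + 1 ≠ 0 := hα1.ne'
  set β : ℝ := 1 / (α + 1) with hβ
  have hβpos : 0 < β := by positivity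
  set B : ℝ := max β 1 with hB
  have hB1 : (1:ℝ) ≤ B := le_max_right _ _
  have hβB : β ≤ B := le_max_left _ _
  have hBpos : (0:ℝ) < B := lt_of_lt_of_le one_pos hB1
  have h2βpos : (0:ℝ) < (2:ℝ) ^ β := Real.rpow_pos_of_pos (by norm_num) _
  set K : ℝ := (B * 2 ^ β / C) ^ β with hK
  have hKpos : 0 < K := Real.rpow_pos_of_pos (by positivity) _
  refine ⟨max (s 0) K, lt_max_of_lt_right hKpos, ?_⟩
  set M := max (s 0) K with hM
  have hMpos : 0 < M := lt_max_of_lt_right hKpos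
  have hMK : K ≤ M := le_max_right _ _
  have hMs0 : s 0 ≤ M := le_max_left _ _
  -- Key constant inequality : B * 2^β ≤ C * M^(α+1)
  have hCM : B * 2 ^ β ≤ C * M ^ (α + 1) := by
    have h1 : K ^ (α + 1) = B * 2 ^ β / C := by
      rw [hK, ← Real.rpow_mul (by positivity)]
      have hx : β * (α + 1) = 1 := by rw [hβ]; field_simp
      rw [hx, Real.rpow_one]
    have h2 : K ^ (α + 1) ≤ M ^ (α + 1) :=
      Real.rpow_le_rpow hKpos.le hMK hα1.le
    rw [h1, div_le_iff₀ hC] at h2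
    linarith
  intro k
  induction k with
  | zero => simpa using hMs0
  | succ k ih =>
    by_contra hcon
    push_neg at hcon
    set n : ℝ := (k : ℝ) + 1 with hn
    have hn1 : (1:ℝ) ≤ n := by
      rw [hn]; have := Nat.cast_nonneg (α := ℝ) k; linarith
    have hnpos : (0:ℝ) < n := by linarith
    have hn1pos : (0:ℝ) < n + 1 := by linarith
    have hn1ne : n + 1 ≠ 0 := hn1pos.ne'
    have hcast : ((k+1 : ℕ) : ℝ) + 1 = n + 1 := by push_cast [hn]; ring
    rw [hcast] at hcon
    set a : ℝ := n ^ β with ha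
    set b : ℝ := (n+1) ^ β with hb
    have hapos : 0 < a := Real.rpow_pos_of_pos hnpos _
    have hbpos : 0 < b := Real.rpow_pos_of_pos hn1pos _
    have hbne : b ≠ 0 := hbpos.ne'
    set y : ℝ := M / b with hy
    have hypos : 0 < y := div_pos hMpos hbpos
    have hylt : y < s (k+1) := hcon
    -- fact1 : (n+1) * (b - a) ≤ B * b
    have fact1 : (n+1) * (b - a) ≤ B * b := by
      set t : ℝ := n / (n+1) with ht
      have ht0 : 0 < t := div_pos hnpos hn1pos
      have ht1 : t ≤ 1 := by rw [ht, div_le_one hn1pos]; linarith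
      have hbern : 1 + B * (t - 1) ≤ t ^ B := by
        have h := one_add_mul_self_le_rpow_one_add (s := t - 1) (by linarith) hB1
        simpa using h
      have hBβ : t ^ B ≤ t ^ β := Real.rpow_le_rpow_of_exponent_ge ht0 ht1 hβB
      have htβ : t ^ β = a / b := by
        rw [ht, Real.div_rpow hnpos.le hn1pos.le]
      rw [htβ] at hBβ
      have h3 : 1 + B * (t - 1) ≤ a / b := le_trans hbern hBβ
      have h4 : (1 + B * (t - 1)) * (b * (n+1)) ≤ (a / b) * (b * (n+1)) :=
        mul_le_mul_of_nonneg_right h3 (by positivity)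
      have h5 : (1 + B * (t - 1)) * (b * (n+1)) = b*(n+1) - B*b := by
        rw [ht]; field_simp; ring
      have h6 : (a / b) * (b * (n+1)) = a*(n+1) := by field_simp
      rw [h5, h6] at h4
      nlinarith
    -- fact2 : B * b ≤ C * M^(α+1) * a
    have fact2 : B * b ≤ C * M ^ (α + 1) * a := by
      have hb2a : b ≤ 2 ^ β * a := by
        have h5 : (n+1) ^ β ≤ (2*n) ^ β :=
          Real.rpow_le_rpow hn1pos.le (by linarith) hβpos.le
        rw [Real.mul_rpow (by norm_num) hnpos.le] at h5
        exact h5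
      calc B * b ≤ B * (2 ^ β * a) := mul_le_mul_of_nonneg_left hb2a hBpos.le
        _ = (B * 2 ^ β) * a := by ring
        _ ≤ (C * M ^ (α + 1)) * a := mul_le_mul_of_nonneg_right hCM hapos.le
    -- powers of y
    have hbpow : b ^ (α+2) = (n+1) * b := by
      rw [hb, ← Real.rpow_mul hn1pos.le]
      have hexp : β * (α+2) = 1 + β := by rw [hβ]; field_simp; ring
      rw [hexp, Real.rpow_add hn1pos, Real.rpow_one]
    have hya : y ^ (α+2) = M ^ (α+2) / ((n+1) * b) := by
      rw [hy, Real.div_rpow hMpos.le hbpos.le, hbpow]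
    have hM2 : M ^ (α+2) = M ^ (α+1) * M := by
      have hx : α + 2 = (α+1) + 1 := by ring
      rw [hx, Real.rpow_add_one hMpos.ne']
    -- key inequality : M / a ≤ y + C * y^(α+2)
    have key : M / a ≤ y + C * y ^ (α+2) := by
      rw [hya, hy, hM2, ← mul_div_assoc,
        div_add_div _ _ hbne (by positivity : (n+1)*b ≠ 0),
        div_le_div_iff₀ hapos (by positivity)]
      have H := mul_le_mul_of_nonneg_left (fact1.trans fact2)
        (by positivity : (0:ℝ) ≤ M * b)
      nlinarith [H]
    -- contradiction
    have hsy : y ^ (α+2) < s (k+1) ^ (α+2) :=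
      Real.rpow_lt_rpow hypos.le hylt (by linarith)
    have h7 : C * y ^ (α+2) < C * s (k+1) ^ (α+2) :=
      mul_lt_mul_of_pos_left hsy hC
    have h8 := hrec k
    linarith [ih]
end

section
/- Let H be a real Hilbert space, B : H → H a bounded linear operator, and 1 ≤ r ≤ 2. Define F_r : H → H by F_r(y) = (⟨By, y⟩/‖y‖^r)·By for y ≠ 0 and F_r(0) = 0. Then F_r is locally Lipschitz on H. -/
open RealInnerProductSpace

set_option maxHeartbeats 1000000

lemma aux_rpow_sub_rpow_le {a b r : ℝ} (hb : 0 ≤ b) (hba : b ≤ a) (hr : 1 ≤ r) :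
    a ^ r - b ^ r ≤ r * a ^ (r - 1) * (a - b) := by
  rcases eq_or_lt_of_le (hb.trans hba) with h | ha
  · have hb0 : b = 0 := le_antisymm (hba.trans_eq h.symm) hb
    simp [← h, hb0, Real.zero_rpow (by linarith : r ≠ 0)]
  · have hs : (-1 : ℝ) ≤ b / a - 1 := by
      have : 0 ≤ b / a := div_nonneg hb ha.le
      linarith
    have key := one_add_mul_self_le_rpow_one_add hs hr
    have h1 : 1 + (b / a - 1) = b / a := by ring
    rw [h1, Real.div_rpow hb ha.le] at key
    have har : (0:ℝ) < a ^ r := Real.rpow_pos_of_pos ha r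
    have har1 : a ^ (r - 1) = a ^ r / a := Real.rpow_sub_one ha.ne' r
    have hkey2 : (1 + r * (b / a - 1)) * a ^ r ≤ b ^ r := by
      calc (1 + r * (b / a - 1)) * a ^ r ≤ (b ^ r / a ^ r) * a ^ r := by
            exact mul_le_mul_of_nonneg_right key har.le
        _ = b ^ r := by field_simp
    have hba' : b / a * a = b := div_mul_cancel₀ b ha.ne'
    rw [har1]
    have expand : (1 + r * (b / a - 1)) * a ^ r
        = a ^ r + r * (a ^ r / a) * (b / a * a - a) := by
      field_simp
    rw [expand, hba'] at hkey2
    linarith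

/-- The key estimate, assuming `‖y‖ ≤ ‖z‖ ≤ R`. -/
lemma aux_key {H : Type*} [NormedAddCommGroup H] [InnerProductSpace ℝ H]
    (B : H →L[ℝ] H) (r : ℝ) (hr1 : 1 ≤ r) (hr2 : r ≤ 2) (F : H → H)
    (hF0 : F 0 = 0)
    (hF : ∀ y : H, y ≠ 0 → F y = (⟪B y, y⟫ / ‖y‖ ^ r) • B y)
    (R : ℝ) (hR : 1 ≤ R) (y z : H) (hyR : ‖y‖ ≤ R) (hzR : ‖z‖ ≤ R)
    (hyz : ‖y‖ ≤ ‖z‖) :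
    ‖F z - F y‖ ≤ 5 * (‖B‖ ^ 2 * R ^ (2 - r)) * ‖z - y‖ := by
  have hb0 : (0:ℝ) ≤ ‖B‖ := norm_nonneg B
  have hRpos : (0:ℝ) < R := lt_of_lt_of_le one_pos hR
  have hR2r : (0:ℝ) < R ^ (2 - r) := Real.rpow_pos_of_pos hRpos _
  by_cases hz0 : z = 0
  · have hy0 : y = 0 := by
      have : ‖y‖ ≤ 0 := by simpa [hz0] using hyz
      exact norm_le_zero_iff.mp this
    rw [hz0, hy0, hF0, sub_self, norm_zero]
    positivity
  have hnz : (0:ℝ) < ‖z‖ := norm_pos_iff.mpr hz0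
  have hcz : (0:ℝ) < ‖z‖ ^ r := Real.rpow_pos_of_pos hnz r
  -- bound on the rpow factor ‖z‖^(2-r) ≤ R^(2-r)
  have hz2r : ‖z‖ ^ (2 - r) ≤ R ^ (2 - r) :=
    Real.rpow_le_rpow hnz.le hzR (by linarith)
  have hBz : ‖B z‖ ≤ ‖B‖ * ‖z‖ := B.le_opNorm z
  have hipz : |⟪B z, z⟫| ≤ ‖B‖ * ‖z‖ ^ 2 := by
    calc |⟪B z, z⟫| ≤ ‖B z‖ * ‖z‖ := abs_real_inner_le_norm _ _
      _ ≤ ‖B‖ * ‖z‖ * ‖z‖ := by nlinarith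
      _ = ‖B‖ * ‖z‖ ^ 2 := by ring
  by_cases hy0 : y = 0
  · -- F y = 0
    subst hy0
    rw [hF0, sub_zero, hF z hz0, norm_smul, Real.norm_eq_abs, abs_div,
      abs_of_pos hcz]
    have h3 : ‖z‖ ^ (3:ℝ) / ‖z‖ ^ r = ‖z‖ ^ ((3:ℝ) - r) := (Real.rpow_sub hnz 3 r).symm
    have h32 : ‖z‖ ^ ((3:ℝ) - r) = ‖z‖ ^ (2 - r) * ‖z‖ := by
      rw [show (3:ℝ) - r = (2 - r) + 1 by ring, Real.rpow_add hnz, Real.rpow_one]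
    calc |⟪B z, z⟫| / ‖z‖ ^ r * ‖B z‖
        ≤ (‖B‖ * ‖z‖ ^ 2) / ‖z‖ ^ r * (‖B‖ * ‖z‖) := by
          gcongr <;> first | assumption | positivity
      _ = ‖B‖ ^ 2 * (‖z‖ ^ (3:ℝ) / ‖z‖ ^ r) := by
          rw [show ‖z‖ ^ (3:ℝ) = ‖z‖ ^ (3:ℕ) from Real.rpow_natCast _ 3]
          ring
      _ = ‖B‖ ^ 2 * (‖z‖ ^ (2 - r) * ‖z‖) := by rw [h3, h32]
      _ ≤ ‖B‖ ^ 2 * (R ^ (2 - r) * ‖z‖) := by gcongr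
      _ ≤ 5 * (‖B‖ ^ 2 * R ^ (2 - r)) * ‖z - 0‖ := by
          rw [sub_zero]
          nlinarith [sq_nonneg ‖B‖, mul_nonneg (mul_nonneg (sq_nonneg ‖B‖) hR2r.le) hnz.le]
  -- main case: y ≠ 0, z ≠ 0
  have hny : (0:ℝ) < ‖y‖ := norm_pos_iff.mpr hy0
  have hca : (0:ℝ) < ‖y‖ ^ r := Real.rpow_pos_of_pos hny r
  have hac : ‖y‖ ^ r ≤ ‖z‖ ^ r := Real.rpow_le_rpow hny.le hyz (by linarith)
  have hBy : ‖B y‖ ≤ ‖B‖ * ‖y‖ := B.le_opNorm y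
  have hipy : |⟪B y, y⟫| ≤ ‖B‖ * ‖y‖ ^ 2 := by
    calc |⟪B y, y⟫| ≤ ‖B y‖ * ‖y‖ := abs_real_inner_le_norm _ _
      _ ≤ ‖B‖ * ‖y‖ * ‖y‖ := by nlinarith
      _ = ‖B‖ * ‖y‖ ^ 2 := by ring
  obtain ⟨Gz, hGzdef⟩ : ∃ g : H, ⟪B z, z⟫ • B z = g := ⟨_, rfl⟩
  obtain ⟨Gy, hGydef⟩ : ∃ g : H, ⟪B y, y⟫ • B y = g := ⟨_, rfl⟩
  have hdec : F z - F y = (‖z‖ ^ r)⁻¹ • (Gz - Gy) + ((‖z‖ ^ r)⁻¹ - (‖y‖ ^ r)⁻¹) • Gy := by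
    rw [hF z hz0, hF y hy0, div_eq_inv_mul, div_eq_inv_mul, mul_smul, mul_smul,
      hGzdef, hGydef, smul_sub, sub_smul]
    abel
  -- estimate 1 : ‖Gz - Gy‖ ≤ 3‖B‖²‖z‖²‖z-y‖
  have hG : ‖Gz - Gy‖ ≤ 3 * ‖B‖ ^ 2 * ‖z‖ ^ 2 * ‖z - y‖ := by
    have hsplit : Gz - Gy = (⟪B z, z⟫ - ⟪B y, y⟫) • B z + ⟪B y, y⟫ • (B z - B y) := by
      rw [← hGzdef, ← hGydef, sub_smul, smul_sub]; abel
    have hipd : |⟪B z, z⟫ - ⟪B y, y⟫| ≤ 2 * ‖B‖ * ‖z‖ * ‖z - y‖ := by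
      have heq : ⟪B z, z⟫ - ⟪B y, y⟫ = ⟪B (z - y), z⟫ + ⟪B y, z - y⟫ := by
        rw [map_sub]
        rw [inner_sub_left, inner_sub_right]
        ring
      rw [heq]
      have h1 : |⟪B (z - y), z⟫| ≤ ‖B‖ * ‖z - y‖ * ‖z‖ := by
        calc |⟪B (z - y), z⟫| ≤ ‖B (z - y)‖ * ‖z‖ := abs_real_inner_le_norm _ _
          _ ≤ ‖B‖ * ‖z - y‖ * ‖z‖ := by
              have := B.le_opNorm (z - y)
              nlinarith [norm_nonneg z]
      have h2 : |⟪B y, z - y⟫| ≤ ‖B‖ * ‖y‖ * ‖z - y‖ := by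
        calc |⟪B y, z - y⟫| ≤ ‖B y‖ * ‖z - y‖ := abs_real_inner_le_norm _ _
          _ ≤ ‖B‖ * ‖y‖ * ‖z - y‖ := by nlinarith [norm_nonneg (z - y)]
      calc |⟪B (z - y), z⟫ + ⟪B y, z - y⟫| ≤ |⟪B (z - y), z⟫| + |⟪B y, z - y⟫| := abs_add_le _ _
        _ ≤ ‖B‖ * ‖z - y‖ * ‖z‖ + ‖B‖ * ‖y‖ * ‖z - y‖ := by linarith
        _ ≤ 2 * ‖B‖ * ‖z‖ * ‖z - y‖ := by
            nlinarith [mul_nonneg (mul_nonneg (norm_nonneg B) (norm_nonneg (z - y)))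
              (sub_nonneg.mpr hyz)]
    have hBzy : ‖B z - B y‖ ≤ ‖B‖ * ‖z - y‖ := by
      have := B.le_opNorm (z - y); rwa [map_sub] at this
    calc ‖Gz - Gy‖ = ‖(⟪B z, z⟫ - ⟪B y, y⟫) • B z + ⟪B y, y⟫ • (B z - B y)‖ := by
          rw [hsplit]
      _ ≤ ‖(⟪B z, z⟫ - ⟪B y, y⟫) • B z‖ + ‖⟪B y, y⟫ • (B z - B y)‖ := norm_add_le _ _
      _ = |⟪B z, z⟫ - ⟪B y, y⟫| * ‖B z‖ + |⟪B y, y⟫| * ‖B z - B y‖ := by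
          rw [norm_smul, norm_smul, Real.norm_eq_abs, Real.norm_eq_abs]
      _ ≤ (2 * ‖B‖ * ‖z‖ * ‖z - y‖) * (‖B‖ * ‖z‖) + (‖B‖ * ‖y‖ ^ 2) * (‖B‖ * ‖z - y‖) := by
          gcongr <;> first | exact abs_nonneg _ | positivity | assumption
      _ ≤ 3 * ‖B‖ ^ 2 * ‖z‖ ^ 2 * ‖z - y‖ := by
          have hsq : ‖y‖ ^ 2 ≤ ‖z‖ ^ 2 := by nlinarith
          nlinarith [mul_nonneg (mul_nonneg (mul_nonneg hb0 hb0) (norm_nonneg (z - y)))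
            (sub_nonneg.mpr hsq)]
  -- estimate on ‖Gy‖
  have hGy : ‖Gy‖ ≤ ‖B‖ ^ 2 * ‖y‖ ^ 3 := by
    rw [← hGydef, norm_smul, Real.norm_eq_abs]
    calc |⟪B y, y⟫| * ‖B y‖ ≤ (‖B‖ * ‖y‖ ^ 2) * (‖B‖ * ‖y‖) := by
          gcongr <;> first | exact abs_nonneg _ | positivity | assumption
      _ = ‖B‖ ^ 2 * ‖y‖ ^ 3 := by ring
  -- difference of inverses
  have hdiffinv : (‖y‖ ^ r)⁻¹ - (‖z‖ ^ r)⁻¹ = (‖z‖ ^ r - ‖y‖ ^ r) / (‖y‖ ^ r * ‖z‖ ^ r) := by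
    field_simp
  have hpowdiff : ‖z‖ ^ r - ‖y‖ ^ r ≤ 2 * ‖z‖ ^ (r - 1) * ‖z - y‖ := by
    have h1 := aux_rpow_sub_rpow_le hny.le hyz hr1
    have h2 : ‖z‖ - ‖y‖ ≤ ‖z - y‖ := by
      have := norm_sub_norm_le z y
      linarith [le_abs_self (‖z‖ - ‖y‖)]
    have hzr1 : (0:ℝ) ≤ ‖z‖ ^ (r - 1) := (Real.rpow_pos_of_pos hnz _).le
    nlinarith [mul_nonneg (mul_nonneg (by linarith : (0:ℝ) ≤ 2 - r) hzr1)
      (sub_nonneg.mpr hyz),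
      mul_nonneg hzr1 (by linarith : (0:ℝ) ≤ ‖z - y‖ - (‖z‖ - ‖y‖))]
  -- combined rpow fraction bound
  have hfrac : ‖z‖ ^ (r - 1) * ‖y‖ ^ (3:ℕ) / (‖y‖ ^ r * ‖z‖ ^ r) ≤ R ^ (2 - r) := by
    have e1 : (‖y‖:ℝ) ^ (3:ℕ) = ‖y‖ ^ r * ‖y‖ ^ ((3:ℝ) - r) := by
      rw [← Real.rpow_add hny, ← Real.rpow_natCast ‖y‖ 3]
      norm_num
    have e2 : ‖z‖ ^ (r - 1) / ‖z‖ ^ r = (‖z‖)⁻¹ := by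
      rw [← Real.rpow_sub hnz, show r - 1 - r = (-1:ℝ) by ring, Real.rpow_neg_one]
    have e3 : ‖y‖ ^ ((3:ℝ) - r) ≤ ‖z‖ ^ ((3:ℝ) - r) :=
      Real.rpow_le_rpow hny.le hyz (by linarith)
    calc ‖z‖ ^ (r - 1) * ‖y‖ ^ (3:ℕ) / (‖y‖ ^ r * ‖z‖ ^ r)
        = (‖z‖ ^ (r - 1) / ‖z‖ ^ r) * ‖y‖ ^ ((3:ℝ) - r) := by
          rw [e1]
          field_simp
      _ ≤ (‖z‖)⁻¹ * ‖z‖ ^ ((3:ℝ) - r) := by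
          rw [e2]
          exact mul_le_mul_of_nonneg_left e3 (by positivity)
      _ = ‖z‖ ^ (2 - r) := by
          rw [← Real.rpow_neg_one ‖z‖, ← Real.rpow_add hnz]
          congr 1
          ring
      _ ≤ R ^ (2 - r) := hz2r
  -- final computation for second term
  have hT2 : ((‖y‖ ^ r)⁻¹ - (‖z‖ ^ r)⁻¹) * ‖Gy‖ ≤ 2 * (‖B‖ ^ 2 * R ^ (2 - r)) * ‖z - y‖ := by
    have hpos1 : (0:ℝ) ≤ (‖z‖ ^ r - ‖y‖ ^ r) / (‖y‖ ^ r * ‖z‖ ^ r) :=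
      div_nonneg (by linarith) (by positivity)
    calc ((‖y‖ ^ r)⁻¹ - (‖z‖ ^ r)⁻¹) * ‖Gy‖
        ≤ ((‖z‖ ^ r - ‖y‖ ^ r) / (‖y‖ ^ r * ‖z‖ ^ r)) * (‖B‖ ^ 2 * ‖y‖ ^ 3) := by
          rw [hdiffinv]
          exact mul_le_mul_of_nonneg_left hGy hpos1
      _ ≤ ((2 * ‖z‖ ^ (r - 1) * ‖z - y‖) / (‖y‖ ^ r * ‖z‖ ^ r)) * (‖B‖ ^ 2 * ‖y‖ ^ 3) := by
          gcongr
      _ = (2 * ‖B‖ ^ 2 * ‖z - y‖) * (‖z‖ ^ (r - 1) * ‖y‖ ^ (3:ℕ) / (‖y‖ ^ r * ‖z‖ ^ r)) := by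
          field_simp
      _ ≤ (2 * ‖B‖ ^ 2 * ‖z - y‖) * R ^ (2 - r) :=
          mul_le_mul_of_nonneg_left hfrac (by positivity)
      _ = 2 * (‖B‖ ^ 2 * R ^ (2 - r)) * ‖z - y‖ := by ring
  -- first term
  have hz2 : ‖z‖ ^ (2:ℕ) / ‖z‖ ^ r ≤ R ^ (2 - r) := by
    rw [← Real.rpow_natCast ‖z‖ 2, ← Real.rpow_sub hnz]
    norm_num
    exact hz2r
  have hT1 : (‖z‖ ^ r)⁻¹ * ‖Gz - Gy‖ ≤ 3 * (‖B‖ ^ 2 * R ^ (2 - r)) * ‖z - y‖ := by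
    calc (‖z‖ ^ r)⁻¹ * ‖Gz - Gy‖
        ≤ (‖z‖ ^ r)⁻¹ * (3 * ‖B‖ ^ 2 * ‖z‖ ^ 2 * ‖z - y‖) :=
          mul_le_mul_of_nonneg_left hG (by positivity)
      _ = 3 * ‖B‖ ^ 2 * ‖z - y‖ * (‖z‖ ^ (2:ℕ) / ‖z‖ ^ r) := by
          field_simp
      _ ≤ 3 * ‖B‖ ^ 2 * ‖z - y‖ * R ^ (2 - r) :=
          mul_le_mul_of_nonneg_left hz2 (by positivity)
      _ = 3 * (‖B‖ ^ 2 * R ^ (2 - r)) * ‖z - y‖ := by ring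
  calc ‖F z - F y‖
      = ‖(‖z‖ ^ r)⁻¹ • (Gz - Gy) + ((‖z‖ ^ r)⁻¹ - (‖y‖ ^ r)⁻¹) • Gy‖ := by rw [hdec]
    _ ≤ ‖(‖z‖ ^ r)⁻¹ • (Gz - Gy)‖ + ‖((‖z‖ ^ r)⁻¹ - (‖y‖ ^ r)⁻¹) • Gy‖ := norm_add_le _ _
    _ = (‖z‖ ^ r)⁻¹ * ‖Gz - Gy‖ + |(‖z‖ ^ r)⁻¹ - (‖y‖ ^ r)⁻¹| * ‖Gy‖ := by
        rw [norm_smul, norm_smul, Real.norm_eq_abs, Real.norm_eq_abs,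
          abs_of_pos (inv_pos.mpr hcz)]
    _ = (‖z‖ ^ r)⁻¹ * ‖Gz - Gy‖ + ((‖y‖ ^ r)⁻¹ - (‖z‖ ^ r)⁻¹) * ‖Gy‖ := by
        rw [abs_sub_comm, abs_of_nonneg]
        rw [sub_nonneg]
        exact inv_anti₀ hca hac
    _ ≤ 3 * (‖B‖ ^ 2 * R ^ (2 - r)) * ‖z - y‖ + 2 * (‖B‖ ^ 2 * R ^ (2 - r)) * ‖z - y‖ := by
        linarith
    _ = 5 * (‖B‖ ^ 2 * R ^ (2 - r)) * ‖z - y‖ := by ring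

/-- For a bounded linear operator `B` on a real Hilbert space and `1 ≤ r ≤ 2`,
the map `F_r y = (⟪B y, y⟫ / ‖y‖ ^ r) • B y` (with `F_r 0 = 0`) is locally
Lipschitz on `H`. -/
theorem stmt_2 {H : Type*} [NormedAddCommGroup H] [InnerProductSpace ℝ H]
    (B : H →L[ℝ] H) (r : ℝ) (hr1 : 1 ≤ r) (hr2 : r ≤ 2) (F : H → H)
    (hF0 : F 0 = 0)
    (hF : ∀ y : H, y ≠ 0 → F y = (⟪B y, y⟫ / ‖y‖ ^ r) • B y) :
    LocallyLipschitz F := by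
  intro x
  set R : ℝ := ‖x‖ + 1 with hRdef
  have hR : 1 ≤ R := by
    have := norm_nonneg x
    simp only [hRdef]
    linarith
  have hC0 : (0:ℝ) ≤ 5 * (‖B‖ ^ 2 * R ^ (2 - r)) := by positivity
  refine ⟨(5 * (‖B‖ ^ 2 * R ^ (2 - r))).toNNReal, Metric.ball 0 R,
    Metric.isOpen_ball.mem_nhds ?_, ?_⟩
  · rw [Metric.mem_ball, dist_zero_right]
    simp only [hRdef]
    linarith
  · apply LipschitzOnWith.of_dist_le_mul
    intro u hu v hv
    rw [Metric.mem_ball, dist_zero_right] at hu hv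
    rw [Real.coe_toNNReal _ hC0, dist_eq_norm, dist_eq_norm]
    rcases le_total ‖v‖ ‖u‖ with h | h
    · exact aux_key B r hr1 hr2 F hF0 hF R hR v u hv.le hu.le h
    · rw [norm_sub_rev (F u), norm_sub_rev u]
      exact aux_key B r hr1 hr2 F hF0 hF R hR u v hu.le hv.le h
end

section
/- Let H be a real Hilbert space and B : H → H a bounded linear operator. The map F : H → H defined by F(z) = (⟨Bz, z⟩/‖z‖²)·Bz for z ≠ 0 and F(0) = 0 is globally Lipschitz, i.e. there exists L > 0 with ‖F(y) − F(z)‖ ≤ L‖y − z‖ for all y, z ∈ H. -/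
open RealInnerProductSpace

set_option maxHeartbeats 800000 in
private lemma key_est {H : Type*} [NormedAddCommGroup H] [InnerProductSpace ℝ H]
    (B : H →L[ℝ] H) (y z : H) (hy : y ≠ 0) (hz : z ≠ 0) (h : ‖z‖ ≤ ‖y‖) :
    ‖(⟪B y, y⟫ / ‖y‖ ^ 2) • B y - (⟪B z, z⟫ / ‖z‖ ^ 2) • B z‖
      ≤ 5 * ‖B‖ ^ 2 * ‖y - z‖ := by
  set a := ⟪B y, y⟫ with ha
  set b := ⟪B z, z⟫ with hb
  have hny : (0:ℝ) < ‖y‖ := norm_pos_iff.mpr hy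
  have hnz : (0:ℝ) < ‖z‖ := norm_pos_iff.mpr hz
  set p := ‖y‖ ^ 2 with hp'
  set q := ‖z‖ ^ 2 with hq'
  have hp : (0:ℝ) < p := by positivity
  have hq : (0:ℝ) < q := by positivity
  have hBnn : (0:ℝ) ≤ ‖B‖ := norm_nonneg B
  have hyz : (0:ℝ) ≤ ‖y - z‖ := norm_nonneg _
  -- basic bounds
  have hBy : ‖B y‖ ≤ ‖B‖ * ‖y‖ := B.le_opNorm y
  have hBz : ‖B z‖ ≤ ‖B‖ * ‖z‖ := B.le_opNorm z
  have hAa : |a| ≤ ‖B‖ * p := by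
    calc |a| ≤ ‖B y‖ * ‖y‖ := abs_real_inner_le_norm _ _
    _ ≤ (‖B‖ * ‖y‖) * ‖y‖ := by nlinarith
    _ = ‖B‖ * p := by rw [hp']; ring
  have hAb : |b| ≤ ‖B‖ * q := by
    calc |b| ≤ ‖B z‖ * ‖z‖ := abs_real_inner_le_norm _ _
    _ ≤ (‖B‖ * ‖z‖) * ‖z‖ := by nlinarith
    _ = ‖B‖ * q := by rw [hq']; ring
  have hab : |a - b| ≤ ‖B‖ * (‖y‖ + ‖z‖) * ‖y - z‖ := by
    have e : a - b = ⟪B (y - z), y⟫ + ⟪B z, y - z⟫ := by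
      rw [ha, hb, map_sub, inner_sub_left, inner_sub_right]; ring
    have h1 : |⟪B (y - z), y⟫| ≤ (‖B‖ * ‖y - z‖) * ‖y‖ := by
      calc |⟪B (y - z), y⟫| ≤ ‖B (y - z)‖ * ‖y‖ := abs_real_inner_le_norm _ _
      _ ≤ (‖B‖ * ‖y - z‖) * ‖y‖ := by
          have := B.le_opNorm (y - z); nlinarith
    have h2 : |⟪B z, y - z⟫| ≤ (‖B‖ * ‖z‖) * ‖y - z‖ := by
      calc |⟪B z, y - z⟫| ≤ ‖B z‖ * ‖y - z‖ := abs_real_inner_le_norm _ _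
      _ ≤ (‖B‖ * ‖z‖) * ‖y - z‖ := by nlinarith
    calc |a - b| ≤ |⟪B (y - z), y⟫| + |⟪B z, y - z⟫| := by rw [e]; exact abs_add_le _ _
    _ ≤ (‖B‖ * ‖y - z‖) * ‖y‖ + (‖B‖ * ‖z‖) * ‖y - z‖ := by linarith
    _ = ‖B‖ * (‖y‖ + ‖z‖) * ‖y - z‖ := by ring
  have hqp : |q - p| ≤ (‖y‖ + ‖z‖) * ‖y - z‖ := by
    have h1 : |‖z‖ - ‖y‖| ≤ ‖z - y‖ := abs_norm_sub_norm_le z y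
    have h2 : ‖z - y‖ = ‖y - z‖ := norm_sub_rev z y
    have e : q - p = (‖z‖ - ‖y‖) * (‖z‖ + ‖y‖) := by rw [hp', hq']; ring
    calc |q - p| = |‖z‖ - ‖y‖| * |‖z‖ + ‖y‖| := by rw [e, abs_mul]
    _ = |‖z‖ - ‖y‖| * (‖y‖ + ‖z‖) := by
        rw [abs_of_nonneg (by positivity : (0:ℝ) ≤ ‖z‖ + ‖y‖)]; ring
    _ ≤ ‖y - z‖ * (‖y‖ + ‖z‖) := by
        apply mul_le_mul_of_nonneg_right _ (by positivity)
        rw [← h2]; exact h1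
    _ = (‖y‖ + ‖z‖) * ‖y - z‖ := by ring
  -- numerator bound
  have hnum : |a * q - b * p| ≤ 2 * ‖B‖ * (‖y‖ + ‖z‖) * ‖y - z‖ * q := by
    have e : a * q - b * p = (a - b) * q + b * (q - p) := by ring
    calc |a * q - b * p| ≤ |(a - b) * q| + |b * (q - p)| := by rw [e]; exact abs_add_le _ _
    _ = |a - b| * q + |b| * |q - p| := by
        rw [abs_mul, abs_mul, abs_of_pos hq]
    _ ≤ (‖B‖ * (‖y‖ + ‖z‖) * ‖y - z‖) * q + (‖B‖ * q) * ((‖y‖ + ‖z‖) * ‖y - z‖) := by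
        have nn1 : (0:ℝ) ≤ |b| := abs_nonneg _
        have nn2 : (0:ℝ) ≤ |q - p| := abs_nonneg _
        nlinarith
    _ = 2 * ‖B‖ * (‖y‖ + ‖z‖) * ‖y - z‖ * q := by ring
  -- split the difference
  have hsplit : (a / p) • B y - (b / q) • B z
      = (a / p) • (B y - B z) + (a / p - b / q) • B z := by
    rw [smul_sub, sub_smul]; abel
  have hap : |a / p| ≤ ‖B‖ := by
    rw [abs_div, abs_of_pos hp, div_le_iff₀ hp]; exact hAa
  have hdiff : |a / p - b / q| ≤ 2 * ‖B‖ * (‖y‖ + ‖z‖) * ‖y - z‖ / p := by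
    rw [div_sub_div _ _ hp.ne' hq.ne', abs_div, abs_of_pos (mul_pos hp hq),
      div_le_div_iff₀ (mul_pos hp hq) hp]
    calc |a * q - p * b| * p ≤ (2 * ‖B‖ * (‖y‖ + ‖z‖) * ‖y - z‖ * q) * p := by
          have e : a * q - p * b = a * q - b * p := by ring
          rw [e]; exact mul_le_mul_of_nonneg_right hnum hp.le
    _ = 2 * ‖B‖ * (‖y‖ + ‖z‖) * ‖y - z‖ * (p * q) := by ring
  have hByz : ‖B y - B z‖ ≤ ‖B‖ * ‖y - z‖ := by
    rw [← map_sub]; exact B.le_opNorm _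
  -- combine
  have step : ‖(a / p) • B y - (b / q) • B z‖
      ≤ ‖B‖ * (‖B‖ * ‖y - z‖) + (2 * ‖B‖ * (‖y‖ + ‖z‖) * ‖y - z‖ / p) * (‖B‖ * ‖z‖) := by
    rw [hsplit]
    calc ‖(a / p) • (B y - B z) + (a / p - b / q) • B z‖
        ≤ ‖(a / p) • (B y - B z)‖ + ‖(a / p - b / q) • B z‖ := norm_add_le _ _
    _ = |a / p| * ‖B y - B z‖ + |a / p - b / q| * ‖B z‖ := by
        rw [norm_smul, norm_smul, Real.norm_eq_abs, Real.norm_eq_abs]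
    _ ≤ ‖B‖ * (‖B‖ * ‖y - z‖) + (2 * ‖B‖ * (‖y‖ + ‖z‖) * ‖y - z‖ / p) * (‖B‖ * ‖z‖) := by
        have t1 : |a / p| * ‖B y - B z‖ ≤ ‖B‖ * (‖B‖ * ‖y - z‖) :=
          mul_le_mul hap hByz (norm_nonneg _) hBnn
        have t2 : |a / p - b / q| * ‖B z‖
            ≤ (2 * ‖B‖ * (‖y‖ + ‖z‖) * ‖y - z‖ / p) * (‖B‖ * ‖z‖) :=
          mul_le_mul hdiff hBz (norm_nonneg _) (by positivity)
        linarith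
  refine step.trans ?_
  -- final arithmetic: (‖y‖+‖z‖)*‖z‖ ≤ 2p
  have hkey : (‖y‖ + ‖z‖) * ‖z‖ ≤ 2 * p := by
    rw [hp']; nlinarith
  have hfin : (2 * ‖B‖ * (‖y‖ + ‖z‖) * ‖y - z‖ / p) * (‖B‖ * ‖z‖)
      ≤ 4 * ‖B‖ ^ 2 * ‖y - z‖ := by
    rw [div_mul_eq_mul_div, div_le_iff₀ hp]
    have e1 : 2 * ‖B‖ * (‖y‖ + ‖z‖) * ‖y - z‖ * (‖B‖ * ‖z‖)
        = (2 * (‖B‖ * ‖B‖ * ‖y - z‖)) * ((‖y‖ + ‖z‖) * ‖z‖) := by ring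
    have e2 : 4 * ‖B‖ ^ 2 * ‖y - z‖ * p = (2 * (‖B‖ * ‖B‖ * ‖y - z‖)) * (2 * p) := by ring
    rw [e1, e2]
    exact mul_le_mul_of_nonneg_left hkey (by positivity)
  have e3 : ‖B‖ * (‖B‖ * ‖y - z‖) = ‖B‖ ^ 2 * ‖y - z‖ := by ring
  linarith

/-- For a bounded linear operator `B` on a real Hilbert space, the normalized map
`F z = (⟪B z, z⟫ / ‖z‖²) • B z` (with `F 0 = 0`) is globally Lipschitz: there is
`L > 0` such that `‖F y - F z‖ ≤ L ‖y - z‖` for all `y z`. -/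
theorem stmt_3 {H : Type*} [NormedAddCommGroup H] [InnerProductSpace ℝ H]
    (B : H →L[ℝ] H) (F : H → H) (hF0 : F 0 = 0)
    (hF : ∀ z : H, z ≠ 0 → F z = (⟪B z, z⟫ / ‖z‖ ^ 2) • B z) :
    ∃ L > 0, ∀ y z : H, ‖F y - F z‖ ≤ L * ‖y - z‖ := by
  refine ⟨5 * ‖B‖ ^ 2 + 1, by positivity, ?_⟩
  have hBnn : (0:ℝ) ≤ ‖B‖ := norm_nonneg B
  have aux : ∀ y z : H, ‖z‖ ≤ ‖y‖ → ‖F y - F z‖ ≤ (5 * ‖B‖ ^ 2 + 1) * ‖y - z‖ := by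
    intro y z h
    by_cases hy : y = 0
    · have hz : z = 0 := by
        have : ‖z‖ ≤ 0 := by simpa [hy] using h
        exact norm_le_zero_iff.mp this
      subst hy; subst hz
      simp [hF0]
    · by_cases hz : z = 0
      · subst hz
        rw [hF0, hF y hy, sub_zero, sub_zero]
        have hny : (0:ℝ) < ‖y‖ := norm_pos_iff.mpr hy
        have hp : (0:ℝ) < ‖y‖ ^ 2 := by positivity
        rw [norm_smul, Real.norm_eq_abs]
        have hap : |⟪B y, y⟫ / ‖y‖ ^ 2| ≤ ‖B‖ := by
          rw [abs_div, abs_of_pos hp, div_le_iff₀ hp]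
          calc |⟪B y, y⟫| ≤ ‖B y‖ * ‖y‖ := abs_real_inner_le_norm _ _
          _ ≤ (‖B‖ * ‖y‖) * ‖y‖ := by
              have := B.le_opNorm y
              nlinarith [norm_nonneg y]
          _ = ‖B‖ * ‖y‖ ^ 2 := by ring
        have hBy : ‖B y‖ ≤ ‖B‖ * ‖y‖ := B.le_opNorm y
        have na : (0:ℝ) ≤ |⟪B y, y⟫ / ‖y‖ ^ 2| := abs_nonneg _
        nlinarith [norm_nonneg (B y)]
      · rw [hF y hy, hF z hz]
        have := key_est B y z hy hz h
        have hyz : (0:ℝ) ≤ ‖y - z‖ := norm_nonneg _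
        nlinarith
  intro y z
  rcases le_total ‖z‖ ‖y‖ with h | h
  · exact aux y z h
  · rw [norm_sub_rev, norm_sub_rev y z]
    exact aux z y h
end

section
/- (Fixed-time stability lemma.) Let V : [0,∞) → [0,∞) be absolutely continuous and satisfy V'(t) ≤ −a·V(t)^{1−ν} − b·V(t)^{1+ν} for almost every t ≥ 0, where a, b > 0 and 0 < ν < 1/2. Then V(t) = 0 for all t ≥ T := π/(2ν√(ab)), regardless of the initial value V(0). -/
/-!
Where `V > 0`, `y = V ^ ν` satisfies `y' ≤ -ν (a + b y²)`, so `W = -arctan (√(b/a) y)`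
grows at rate at least `ν √(ab)`. Since `V` is antitone, `W` is monotone, and Lebesgue's
inequality `∫ W' ≤ W T - W 0` for monotone functions applies; but `W` takes values in
`(-π/2, 0]`, so `V` cannot stay positive for a time `π / (2 ν √(ab))`, whatever `V 0` is.
-/

open MeasureTheory Set Filter Real

theorem MonotoneOn.mul_sub_le_sub_of_le_deriv {f : ℝ → ℝ} {a b K : ℝ} (hab : a ≤ b)
    (hf : MonotoneOn f (Icc a b)) (hK : ∀ᵐ x, x ∈ Ioo a b → K ≤ deriv f x) :
    K * (b - a) ≤ f b - f a := by
  have hfab : f a ≤ f b := hf (left_mem_Icc.2 hab) (right_mem_Icc.2 hab) hab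
  rw [← uIcc_of_le hab] at hf
  calc K * (b - a) = ∫ _ in a..b, K := by simp [mul_comm]
    _ ≤ ∫ x in a..b, deriv f x := by
      refine intervalIntegral.integral_mono_ae_restrict hab intervalIntegrable_const
        hf.intervalIntegrable_deriv ?_
      rwa [EventuallyLE, ← restrict_Ioo_eq_restrict_Icc, ae_restrict_iff' measurableSet_Ioo]
    _ ≤ f b - f a := by
      have := hf.intervalIntegral_deriv_mem_uIcc
      rw [uIcc_of_le (sub_nonneg.2 hfab)] at this
      exact this.2

theorem Real.sqrt_div_mul_add_mul_sq {a b : ℝ} (ha : 0 < a) (hb : 0 ≤ b) (y : ℝ) :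
    √(b / a) * (a + b * y ^ 2) = √(a * b) * (1 + (√(b / a) * y) ^ 2) := by
  have hs : √(b / a) * a = √(a * b) := calc
    √(b / a) * a = √(b / a) * √(a ^ 2) := by rw [sqrt_sq ha.le]
    _ = √(a * b) := by rw [← sqrt_mul (div_nonneg hb ha.le)]; congr 1; field_simp
  rw [mul_pow, sq_sqrt (div_nonneg hb ha.le), ← hs]
  field_simp

theorem mul_mul_rpow_sub_one_le_of_le {a b ν x d : ℝ} (hx : 0 < x) (hν : 0 ≤ ν)
    (hd : d ≤ -a * x ^ (1 - ν) - b * x ^ (1 + ν)) :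
    d * ν * x ^ (ν - 1) ≤ -(ν * (a + b * (x ^ ν) ^ 2)) := by
  have h₁ : x ^ (ν - 1) * x ^ (1 - ν) = 1 := by
    rw [← rpow_add hx]; norm_num
  have h₂ : x ^ (ν - 1) * x ^ (1 + ν) = (x ^ ν) ^ 2 := by
    rw [← rpow_add hx, ← rpow_natCast, ← rpow_mul hx.le]; ring_nf
  calc d * ν * x ^ (ν - 1) ≤ (-a * x ^ (1 - ν) - b * x ^ (1 + ν)) * ν * x ^ (ν - 1) := by
        gcongr
    _ = _ := by linear_combination (-(ν * a)) * h₁ - ν * b * h₂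

theorem mul_sqrt_le_deriv_neg_arctan_mul_rpow {V : ℝ → ℝ} {a b ν t : ℝ} (ha : 0 < a)
    (hb : 0 < b) (hν : 0 ≤ ν) (hVt : 0 < V t)
    (hineq : deriv V t ≤ -a * V t ^ (1 - ν) - b * V t ^ (1 + ν)) :
    ν * √(a * b) ≤ deriv (fun s ↦ -arctan (√(b / a) * V s ^ ν)) t := by
  -- `deriv V t = 0` wherever `V` is not differentiable, so `hineq` forces differentiability.
  have hd : deriv V t ≠ 0 := by
    refine (hineq.trans_lt ?_).ne
    have := rpow_pos_of_pos hVt (1 - ν)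
    have := rpow_pos_of_pos hVt (1 + ν)
    nlinarith
  have hV := (differentiableAt_of_deriv_ne_zero hd).hasDerivAt
  have hW : HasDerivAt (fun s ↦ -arctan (√(b / a) * V s ^ ν))
      (-(1 / (1 + (√(b / a) * V t ^ ν) ^ 2) *
        (√(b / a) * (deriv V t * ν * V t ^ (ν - 1))))) t :=
    ((hV.rpow_const (Or.inl hVt.ne')).const_mul _).arctan.neg
  rw [hW.deriv]
  have hbound := mul_le_mul_of_nonneg_left (mul_mul_rpow_sub_one_le_of_le hVt hν hineq)
    (sqrt_nonneg (b / a))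
  calc ν * √(a * b)
        = ν * (√(b / a) * (a + b * (V t ^ ν) ^ 2)) / (1 + (√(b / a) * V t ^ ν) ^ 2) := by
          rw [sqrt_div_mul_add_mul_sq ha hb.le]; field_simp
    _ ≤ -(√(b / a) * (deriv V t * ν * V t ^ (ν - 1))) / (1 + (√(b / a) * V t ^ ν) ^ 2) :=
          by gcongr; linarith
    _ = _ := by ring

theorem stmt_5_general (V : ℝ → ℝ) (a b ν : ℝ) (ha : 0 < a) (hb : 0 < b)
    (hν0 : 0 < ν)
    (hVpos : ∀ t, 0 ≤ t → 0 ≤ V t)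
    (hVmono : AntitoneOn V (Set.Ici (0 : ℝ)))
    (hineq : ∀ᵐ t : ℝ, 0 ≤ t →
      deriv V t ≤ -a * V t ^ (1 - ν) - b * V t ^ (1 + ν)) :
    ∀ t, Real.pi / (2 * ν * Real.sqrt (a * b)) ≤ t → V t = 0 := by
  intro T hT
  by_contra hne
  have hT₀ : 0 < T := (by positivity : 0 < π / (2 * ν * √(a * b))).trans_le hT
  have hVT : 0 < V T := (hVpos T hT₀.le).lt_of_ne' hne
  set W : ℝ → ℝ := fun s ↦ -arctan (√(b / a) * V s ^ ν)
  have hW_mono : MonotoneOn W (Icc 0 T) := fun s hs r hr hsr ↦ by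
    have hVsr : V r ≤ V s := hVmono hs.1 hr.1 hsr
    simp only [W, neg_le_neg_iff]
    gcongr
    exact hVpos r hr.1
  have hW_deriv : ∀ᵐ s, s ∈ Ioo 0 T → ν * √(a * b) ≤ deriv W s := by
    filter_upwards [hineq] with s hs hsT
    have hVs : 0 < V s := hVT.trans_le (hVmono hsT.1.le hT₀.le hsT.2.le)
    exact mul_sqrt_le_deriv_neg_arctan_mul_rpow ha hb hν0.le hVs (hs hsT.1.le)
  have hW_growth := hW_mono.mul_sub_le_sub_of_le_deriv hT₀.le hW_deriv
  have hW_range : W T - W 0 < π / 2 := by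
    have := arctan_lt_pi_div_two (√(b / a) * V 0 ^ ν)
    have := arctan_pos.2 (by positivity : 0 < √(b / a) * V T ^ ν)
    simp only [W]
    linarith
  rw [div_le_iff₀ (by positivity)] at hT
  nlinarith

/-- Fixed-time stability lemma (Parsegov et al.): if a nonnegative nonincreasing
continuous `V`, differentiable a.e., satisfies
`V' ≤ -a V^(1-ν) - b V^(1+ν)` a.e. on `[0,∞)` with `a, b > 0` and `0 < ν < 1/2`,
then `V(t) = 0` for all `t ≥ π / (2 ν √(a b))`, uniformly in `V(0)`. -/
theorem stmt_5 (V : ℝ → ℝ) (a b ν : ℝ) (ha : 0 < a) (hb : 0 < b)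
    (hν0 : 0 < ν) (hν : ν < 1 / 2)
    (hVpos : ∀ t, 0 ≤ t → 0 ≤ V t)
    (hVcont : Continuous V)
    (hVmono : AntitoneOn V (Set.Ici (0 : ℝ)))
    (hVdiff : ∀ᵐ t : ℝ, 0 ≤ t → DifferentiableAt ℝ V t)
    (hineq : ∀ᵐ t : ℝ, 0 ≤ t →
      deriv V t ≤ -a * V t ^ (1 - ν) - b * V t ^ (1 + ν)) :
    ∀ t, Real.pi / (2 * ν * Real.sqrt (a * b)) ≤ t → V t = 0 :=
  stmt_5_general V a b ν ha hb hν0 hVpos hVmono hineq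
end

section
/- Let H be a real Hilbert space and B : H → H a bounded self-adjoint operator with B ≥ 0. Then B is coercive on (ker B)^⊥ (i.e., there exists β > 0 with ⟨Bx,x⟩ ≥ β‖x‖² for all x ∈ (ker B)^⊥) if and only if B has closed range. -/
/-!
Both conditions are equivalent to `B` being bounded below on `K = (ker B)ᗮ`, i.e.
`c ‖x‖ ≤ ‖B x‖` on `K`. Since `B` maps `K` injectively onto `range B`, the open mapping theorem
makes this equivalent to `range B` being closed; this part holds for any bounded operator.
For coercivity, one direction is `⟪B x, x⟫ ≤ ‖B x‖ ‖x‖`; the other is the estimate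
`‖B x‖² ≤ ‖B‖ ⟪B x, x⟫`, which is Cauchy–Schwarz for the semi-inner product `⟪B ·, ·⟫`.
-/

open RealInnerProductSpace

theorem mul_norm_le_norm_of_mul_norm_sq_le_inner {E : Type*} [NormedAddCommGroup E]
    [InnerProductSpace ℝ E] {β : ℝ} {x y : E} (h : β * ‖x‖ ^ 2 ≤ ⟪y, x⟫) :
    β * ‖x‖ ≤ ‖y‖ := by
  rcases (norm_nonneg x).eq_or_lt with hx | hx
  · simp [← hx]
  · refine le_of_mul_le_mul_right ?_ hx
    calc β * ‖x‖ * ‖x‖ = β * ‖x‖ ^ 2 := by ring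
      _ ≤ ⟪y, x⟫ := h
      _ ≤ ‖y‖ * ‖x‖ := real_inner_le_norm y x

namespace ContinuousLinearMap

section Positive

variable {E : Type*} [NormedAddCommGroup E] [InnerProductSpace ℝ E] {T : E →L[ℝ] E}

theorem IsPositive.norm_apply_sq_le (hT : T.IsPositive) (x : E) :
    ‖T x‖ ^ 2 ≤ ‖T‖ * ⟪T x, x⟫ := by
  -- Cauchy–Schwarz for the semi-inner product `⟪T ·, ·⟫`, applied to `x` and `T x`
  have hcs := LinearMap.BilinForm.apply_mul_apply_le_of_forall_zero_le
    ((innerₗ E).comp (T : E →ₗ[ℝ] E)) hT.inner_nonneg_left x (T x)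
  simp only [LinearMap.comp_apply, innerₗ_apply_apply, coe_coe] at hcs
  have hTTx : ⟪T (T x), x⟫ = ‖T x‖ ^ 2 := by
    rw [hT.inner_left_eq_inner_right, real_inner_self_eq_norm_sq]
  have hle : ⟪T (T x), T x⟫ ≤ ‖T‖ * ‖T x‖ ^ 2 :=
    calc ⟪T (T x), T x⟫ ≤ ‖T (T x)‖ * ‖T x‖ := real_inner_le_norm _ _
      _ ≤ ‖T‖ * ‖T x‖ * ‖T x‖ := by gcongr; exact T.le_opNorm _
      _ = ‖T‖ * ‖T x‖ ^ 2 := by ring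
  rcases (norm_nonneg (T x)).eq_or_lt with h0 | h0
  · rw [← h0, sq, zero_mul]
    exact mul_nonneg (norm_nonneg T) (hT.inner_nonneg_left x)
  · rw [real_inner_self_eq_norm_sq, hTTx] at hcs
    have : ‖T x‖ ^ 2 * ‖T x‖ ^ 2 ≤ (‖T‖ * ⟪T x, x⟫) * ‖T x‖ ^ 2 := by
      nlinarith [hT.inner_nonneg_left x]
    exact le_of_mul_le_mul_right this (by positivity)

theorem IsPositive.exists_mul_norm_sq_le_inner_iff (hT : T.IsPositive) (K : Submodule ℝ E) :
    (∃ β > 0, ∀ x ∈ K, β * ‖x‖ ^ 2 ≤ ⟪T x, x⟫) ↔ ∃ c > 0, ∀ x ∈ K, c * ‖x‖ ≤ ‖T x‖ := by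
  refine ⟨fun ⟨β, hβ, h⟩ ↦ ⟨β, hβ, fun x hx ↦ mul_norm_le_norm_of_mul_norm_sq_le_inner (h x hx)⟩,
    fun ⟨c, hc, h⟩ ↦ ⟨c ^ 2 / (‖T‖ + 1), by positivity, fun x hx ↦ ?_⟩⟩
  have hinner := hT.inner_nonneg_left x
  rw [div_mul_eq_mul_div, div_le_iff₀ (by positivity)]
  calc c ^ 2 * ‖x‖ ^ 2 = (c * ‖x‖) ^ 2 := by ring
    _ ≤ ‖T x‖ ^ 2 := by gcongr; exact h x hx
    _ ≤ ‖T‖ * ⟪T x, x⟫ := hT.norm_apply_sq_le x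
    _ ≤ ⟪T x, x⟫ * (‖T‖ + 1) := by nlinarith

end Positive

section ClosedRange

variable {𝕜 E F : Type*} [RCLike 𝕜] [NormedAddCommGroup E] [InnerProductSpace 𝕜 E]
  [NormedAddCommGroup F] [NormedSpace 𝕜 F]

theorem injective_comp_subtypeL_orthogonal_ker (f : E →L[𝕜] F) :
    Function.Injective (f ∘L (LinearMap.ker (f : E →ₗ[𝕜] F))ᗮ.subtypeL) := by
  refine (injective_iff_map_eq_zero _).2 fun ⟨x, hx⟩ hfx ↦ Subtype.ext ?_
  exact Submodule.disjoint_def.1 (Submodule.orthogonal_disjoint _) x hfx hx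

theorem range_comp_subtypeL_orthogonal_ker [CompleteSpace E] (f : E →L[𝕜] F) :
    Set.range (f ∘L (LinearMap.ker (f : E →ₗ[𝕜] F))ᗮ.subtypeL) =
      LinearMap.range (f : E →ₗ[𝕜] F) := by
  ext y
  constructor
  · rintro ⟨x, rfl⟩
    exact ⟨x, rfl⟩
  · rintro ⟨x, rfl⟩
    obtain ⟨u, hu, v, hv, rfl⟩ :=
      (LinearMap.ker (f : E →ₗ[𝕜] F)).exists_add_mem_mem_orthogonal x
    exact ⟨⟨v, hv⟩, by simpa using LinearMap.mem_ker.mp hu⟩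

theorem isClosed_range_iff_exists_mul_norm_le_on_orthogonal_ker [CompleteSpace E]
    [CompleteSpace F] (f : E →L[𝕜] F) :
    IsClosed (LinearMap.range (f : E →ₗ[𝕜] F) : Set F) ↔
      ∃ c > 0, ∀ x ∈ (LinearMap.ker (f : E →ₗ[𝕜] F))ᗮ, c * ‖x‖ ≤ ‖f x‖ := by
  have : CompleteSpace (LinearMap.ker (f : E →ₗ[𝕜] F))ᗮ :=
    (Submodule.isClosed_orthogonal _).completeSpace_coe
  rw [← range_comp_subtypeL_orthogonal_ker, isClosed_range_iff_antilipschitz_of_injective _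
    (injective_comp_subtypeL_orthogonal_ker f), antilipschitzWith_iff_exists_mul_le_norm]
  simp [Subtype.forall]

end ClosedRange

end ContinuousLinearMap

/-- For a bounded self-adjoint `B ≥ 0` on a real Hilbert space, `B` is coercive
on `(ker B)ᗮ` iff `B` has closed range. -/
theorem stmt_7 {H : Type*} [NormedAddCommGroup H] [InnerProductSpace ℝ H]
    [CompleteSpace H] (B : H →L[ℝ] H)
    (hsa : ∀ x y : H, ⟪B x, y⟫ = ⟪x, B y⟫)
    (hpos : ∀ x : H, 0 ≤ ⟪B x, x⟫) :
    (∃ β > 0, ∀ x ∈ (LinearMap.ker (B : H →ₗ[ℝ] H))ᗮ, β * ‖x‖ ^ 2 ≤ ⟪B x, x⟫) ↔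
      IsClosed (LinearMap.range (B : H →ₗ[ℝ] H) : Set H) := by
  have hB : B.IsPositive := ⟨hsa, hpos⟩
  rw [hB.exists_mul_norm_sq_le_inner_iff,
    ContinuousLinearMap.isClosed_range_iff_exists_mul_norm_le_on_orthogonal_ker]
end

section
/- Let H be a real Hilbert space and B : H → H a bounded self-adjoint operator with ⟨Bx,x⟩ ≥ 0 for all x. Let 0 < μ < 1/2 and define φ(z) = ⟨Bz, z⟩^{1−μ}/(2(1−μ)) for z ∈ H. Then φ is convex, continuous, and Fréchet differentiable on H, with derivative φ'(z) = ⟨Bz, z⟩^{−μ}·Bz for z with ⟨Bz,z⟩ ≠ 0 and φ'(0) = 0; in particular at z = 0 one has φ(h)/‖h‖ → 0 as h → 0. -/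
/-!
By Cauchy–Schwarz for the positive symmetric form `⟪B ·, ·⟫`, `z ↦ √⟪B z, z⟫` is a seminorm,
so `φ`, a multiple of its `2(1 - μ)`-th power, is convex because `2(1 - μ) ≥ 1`. Where
`⟪B z, z⟫ ≠ 0` the derivative comes from the chain rule and `d⟪B z, z⟫ = 2⟪B z, ·⟫`. At `0`,
`⟪B h, h⟫ ≤ ‖B‖ ‖h‖²` gives `φ h / ‖h‖ = O(‖h‖ ^ (1 - 2μ))`, which tends to `0` since `μ < 1/2`.
-/

open RealInnerProductSpace Filter

theorem ConvexOn.rpow {E : Type*} [AddCommMonoid E] [Module ℝ E] {s : Set E}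
    {f : E → ℝ} (hf : ConvexOn ℝ s f) (hf₀ : ∀ ⦃x⦄, x ∈ s → 0 ≤ f x) {r : ℝ} (hr : 1 ≤ r) :
    ConvexOn ℝ s fun x => f x ^ r := by
  refine ⟨hf.1, fun x hx y hy a b ha hb hab => ?_⟩
  calc f (a • x + b • y) ^ r ≤ (a • f x + b • f y) ^ r :=
        Real.rpow_le_rpow (hf₀ (hf.1 hx hy ha hb hab)) (hf.2 hx hy ha hb hab) (by linarith)
    _ ≤ a • f x ^ r + b • f y ^ r :=
        (convexOn_rpow hr).2 (hf₀ hx) (hf₀ hy) ha hb hab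

theorem hasFDerivAt_zero_of_tendsto_div_norm {E : Type*} [NormedAddCommGroup E]
    [NormedSpace ℝ E] {f : E → ℝ} (hf₀ : f 0 = 0)
    (hf : Tendsto (fun h => f h / ‖h‖) (nhds 0) (nhds 0)) :
    HasFDerivAt f (0 : E →L[ℝ] ℝ) 0 := by
  rw [hasFDerivAt_iff_isLittleO_nhds_zero]
  simp only [zero_add, hf₀, zero_apply, sub_zero]
  rw [← Asymptotics.isLittleO_norm_right]
  refine (Asymptotics.isLittleO_iff_tendsto fun h hh => ?_).mpr hf
  rw [norm_eq_zero.mp hh, hf₀]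

namespace ContinuousLinearMap

variable {H : Type*} [NormedAddCommGroup H] [InnerProductSpace ℝ H] (B : H →L[ℝ] H)

theorem inner_apply_add_self (hsa : ∀ x y : H, ⟪B x, y⟫ = ⟪x, B y⟫) (x y : H) :
    ⟪B (x + y), x + y⟫ = ⟪B x, x⟫ + 2 * ⟪B x, y⟫ + ⟪B y, y⟫ := by
  have hsymm : ⟪B y, x⟫ = ⟪B x, y⟫ := by rw [hsa, real_inner_comm]
  simp only [map_add, inner_add_left, inner_add_right, hsymm]
  ring

theorem inner_apply_smul_self (c : ℝ) (x : H) : ⟪B (c • x), c • x⟫ = c ^ 2 * ⟪B x, x⟫ := by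
  simp only [map_smul, real_inner_smul_left, real_inner_smul_right]
  ring

theorem inner_apply_sq_le_mul (hsa : ∀ x y : H, ⟪B x, y⟫ = ⟪x, B y⟫)
    (hpos : ∀ x : H, 0 ≤ ⟪B x, x⟫) (x y : H) : ⟪B x, y⟫ ^ 2 ≤ ⟪B x, x⟫ * ⟪B y, y⟫ := by
  have hquad : ∀ t : ℝ, 0 ≤ ⟪B y, y⟫ * (t * t) + 2 * ⟪B x, y⟫ * t + ⟪B x, x⟫ := fun t => by
    have := hpos (x + t • y)
    rw [inner_apply_add_self B hsa, inner_apply_smul_self, real_inner_smul_right] at this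
    linarith
  have := discrim_le_zero hquad
  rw [discrim] at this
  linarith

theorem sqrt_inner_apply_add_self_le (hsa : ∀ x y : H, ⟪B x, y⟫ = ⟪x, B y⟫)
    (hpos : ∀ x : H, 0 ≤ ⟪B x, x⟫) (x y : H) :
    √⟪B (x + y), x + y⟫ ≤ √⟪B x, x⟫ + √⟪B y, y⟫ := by
  have hcross : ⟪B x, y⟫ ≤ √⟪B x, x⟫ * √⟪B y, y⟫ := by
    rw [← Real.sqrt_mul (hpos x)]
    exact Real.le_sqrt_of_sq_le (inner_apply_sq_le_mul B hsa hpos x y)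
  rw [Real.sqrt_le_left (by positivity), inner_apply_add_self B hsa, add_sq,
    Real.sq_sqrt (hpos x), Real.sq_sqrt (hpos y)]
  linarith

noncomputable def formSeminorm (hsa : ∀ x y : H, ⟪B x, y⟫ = ⟪x, B y⟫)
    (hpos : ∀ x : H, 0 ≤ ⟪B x, x⟫) : Seminorm ℝ H :=
  Seminorm.of (fun z => √⟪B z, z⟫) (sqrt_inner_apply_add_self_le B hsa hpos) fun c x => by
    rw [inner_apply_smul_self, Real.sqrt_mul (sq_nonneg c), Real.sqrt_sq_eq_abs, Real.norm_eq_abs]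

theorem convexOn_inner_apply_self_rpow (hsa : ∀ x y : H, ⟪B x, y⟫ = ⟪x, B y⟫)
    (hpos : ∀ x : H, 0 ≤ ⟪B x, x⟫) {p : ℝ} (hp : 1 / 2 ≤ p) :
    ConvexOn ℝ Set.univ fun z => ⟪B z, z⟫ ^ p := by
  have := (formSeminorm B hsa hpos).convexOn.rpow (fun z _ => apply_nonneg _ z)
    (show 1 ≤ 2 * p by linarith)
  convert this using 2 with z
  show _ = (√⟪B z, z⟫) ^ (2 * p)
  rw [Real.sqrt_eq_rpow, ← Real.rpow_mul (hpos z)]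
  congr 1
  ring

theorem hasFDerivAt_inner_apply_self (hsa : ∀ x y : H, ⟪B x, y⟫ = ⟪x, B y⟫) (z : H) :
    HasFDerivAt (fun w => ⟪B w, w⟫) ((2 : ℝ) • innerSL ℝ (B z)) z := by
  refine (B.hasFDerivAt.inner ℝ (hasFDerivAt_id z)).congr_fderiv ?_
  ext u
  simp only [comp_apply, prod_apply, id_apply, id_eq, fderivInnerCLM_apply, smul_apply,
    coe_innerSL_apply, smul_eq_mul]
  rw [hsa u z, real_inner_comm]
  ring

theorem inner_apply_self_le (h : H) : ⟪B h, h⟫ ≤ ‖B‖ * ‖h‖ ^ 2 :=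
  calc ⟪B h, h⟫ ≤ ‖B h‖ * ‖h‖ := real_inner_le_norm _ _
    _ ≤ ‖B‖ * ‖h‖ * ‖h‖ := by gcongr; exact B.le_opNorm h
    _ = ‖B‖ * ‖h‖ ^ 2 := by ring

theorem inner_apply_self_rpow_div_norm_le (hpos : ∀ x : H, 0 ≤ ⟪B x, x⟫) {p : ℝ} (hp : 0 ≤ p)
    (h : H) : ⟪B h, h⟫ ^ p / ‖h‖ ≤ ‖B‖ ^ p * ‖h‖ ^ (2 * p - 1) := by
  rcases eq_or_ne h 0 with rfl | hh
  · simp only [inner_zero_right, norm_zero, div_zero]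
    positivity
  have hn : 0 < ‖h‖ := norm_pos_iff.mpr hh
  rw [div_le_iff₀ hn, mul_assoc, ← Real.rpow_add_one hn.ne', sub_add_cancel, Real.rpow_mul
    (norm_nonneg h), ← Real.mul_rpow (norm_nonneg B) (by positivity)]
  exact Real.rpow_le_rpow (hpos h) (by exact_mod_cast inner_apply_self_le B h) hp

theorem tendsto_inner_apply_self_rpow_div_norm (hpos : ∀ x : H, 0 ≤ ⟪B x, x⟫) {p : ℝ}
    (hp : 1 / 2 < p) : Tendsto (fun h => ⟪B h, h⟫ ^ p / ‖h‖) (nhds 0) (nhds 0) := by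
  have hbound : Tendsto (fun h : H => ‖B‖ ^ p * ‖h‖ ^ (2 * p - 1)) (nhds 0) (nhds 0) := by
    have := (tendsto_norm_zero (E := H)).rpow_const (p := 2 * p - 1) (Or.inr (by linarith))
    rw [Real.zero_rpow (by linarith)] at this
    simpa using this.const_mul (‖B‖ ^ p)
  refine squeeze_zero (fun h => div_nonneg (Real.rpow_nonneg (hpos h) _) (norm_nonneg h))
    (inner_apply_self_rpow_div_norm_le B hpos (by linarith)) hbound

end ContinuousLinearMap

theorem stmt_8_general {H : Type*} [NormedAddCommGroup H] [InnerProductSpace ℝ H]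
    (B : H →L[ℝ] H)
    (hsa : ∀ x y : H, ⟪B x, y⟫ = ⟪x, B y⟫)
    (hpos : ∀ x : H, 0 ≤ ⟪B x, x⟫)
    (μ : ℝ) (hμ : μ < 1 / 2)
    (φ : H → ℝ) (hφ : ∀ z, φ z = ⟪B z, z⟫ ^ (1 - μ) / (2 * (1 - μ))) :
    ConvexOn ℝ Set.univ φ ∧ Continuous φ ∧
    (∀ z : H, ⟪B z, z⟫ ≠ 0 →
      HasFDerivAt φ ((⟪B z, z⟫ ^ (-μ)) • (innerSL ℝ (B z))) z) ∧
    HasFDerivAt φ (0 : H →L[ℝ] ℝ) 0 ∧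
    Tendsto (fun h : H => φ h / ‖h‖) (nhds 0) (nhds 0) := by
  have hμ1 : 0 < 1 - μ := by linarith
  obtain rfl : φ = fun z => ⟪B z, z⟫ ^ (1 - μ) / (2 * (1 - μ)) := funext hφ
  have htend : Tendsto (fun h : H => ⟪B h, h⟫ ^ (1 - μ) / (2 * (1 - μ)) / ‖h‖)
      (nhds 0) (nhds 0) := by
    simpa only [div_right_comm, zero_div] using
      (B.tendsto_inner_apply_self_rpow_div_norm hpos (by linarith)).div_const (2 * (1 - μ))
  refine ⟨?_, ?_, fun z hz => ?_,
    hasFDerivAt_zero_of_tendsto_div_norm (by simp [hμ1.ne']) htend, htend⟩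
  · simpa only [smul_eq_mul, div_eq_inv_mul] using
      (B.convexOn_inner_apply_self_rpow hsa hpos (by linarith)).smul (by positivity)
  · exact ((B.continuous.inner continuous_id).rpow_const fun _ => Or.inr (by linarith)).div_const _
  · simp only [div_eq_mul_inv]
    refine (((B.hasFDerivAt_inner_apply_self hsa z).rpow_const (p := 1 - μ)
      (Or.inl hz)).mul_const _).congr_fderiv ?_
    rw [smul_smul, smul_smul, sub_sub_cancel_left]
    congr 1
    field_simp [hμ1.ne']

/-- For `B = B* ≥ 0` bounded and `0 < μ < 1/2`, the functional
`φ z = ⟪B z, z⟫^(1-μ) / (2(1-μ))` is convex, continuous and Fréchet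
differentiable, with `φ'(z) = ⟪B z, z⟫^(-μ) • ⟪B z, ·⟫` when `⟪B z, z⟫ ≠ 0`
and `φ'(0) = 0`; in particular `φ(h)/‖h‖ → 0` as `h → 0`. -/
theorem stmt_8 {H : Type*} [NormedAddCommGroup H] [InnerProductSpace ℝ H]
    (B : H →L[ℝ] H)
    (hsa : ∀ x y : H, ⟪B x, y⟫ = ⟪x, B y⟫)
    (hpos : ∀ x : H, 0 ≤ ⟪B x, x⟫)
    (μ : ℝ) (hμ0 : 0 < μ) (hμ : μ < 1 / 2)
    (φ : H → ℝ) (hφ : ∀ z, φ z = ⟪B z, z⟫ ^ (1 - μ) / (2 * (1 - μ))) :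
    ConvexOn ℝ Set.univ φ ∧ Continuous φ ∧
    (∀ z : H, ⟪B z, z⟫ ≠ 0 →
      HasFDerivAt φ ((⟪B z, z⟫ ^ (-μ)) • (innerSL ℝ (B z))) z) ∧
    HasFDerivAt φ (0 : H →L[ℝ] ℝ) 0 ∧
    Tendsto (fun h : H => φ h / ‖h‖) (nhds 0) (nhds 0) :=
  stmt_8_general B hsa hpos μ hμ φ hφ
end

section
/- Let H be a Hilbert space and S(t) a strongly continuous semigroup of bounded operators on H. Suppose B : H → H is bounded and linear, and K := ker B is invariant under every S(t). Suppose further that for every x₀ ∈ K there exists T(x₀) ≥ 0 such that S(t)x₀ = 0 for all t ≥ T(x₀). Then the restricted semigroup S(t)|_K is nilpotent: there exists n₀ ∈ ℕ such that (S(1)|_K)^{n₀} = 0, i.e., S(n₀)x = 0 for all x ∈ K. -/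
/-! The sets `E n = {x ∈ ker B | S(n) x = 0}` are closed subspaces covering the Banach space
`ker B`, so by the Baire category theorem one of them has nonempty interior; a subspace with
nonempty interior is the whole space. -/

theorem ContinuousLinearMap.exists_eq_zero_of_forall_exists_apply_eq_zero
    {𝕜 E F ι : Type*} [NontriviallyNormedField 𝕜]
    [AddCommGroup E] [TopologicalSpace E] [Module 𝕜 E] [IsTopologicalAddGroup E]
    [ContinuousSMul 𝕜 E] [BaireSpace E]
    [AddCommGroup F] [TopologicalSpace F] [T1Space F] [Module 𝕜 F] [Countable ι]
    (T : ι → E →L[𝕜] F) (h : ∀ x, ∃ i, T i x = 0) : ∃ i, T i = 0 := by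
  have hcover : ⋃ i, ((T i).ker : Set E) = Set.univ := by
    simpa only [Set.iUnion_eq_univ_iff, SetLike.mem_coe, LinearMap.mem_ker,
      ContinuousLinearMap.coe_coe] using h
  obtain ⟨i, hi⟩ :=
    nonempty_interior_of_iUnion_of_closed (fun i => (T i).isClosed_ker) hcover
  exact ⟨i, ContinuousLinearMap.coe_injective <|
    LinearMap.ker_eq_top.1 ((T i).ker.eq_top_of_nonempty_interior' hi)⟩

theorem ContinuousLinearMap.exists_forall_mem_apply_eq_zero_of_isClosed
    {𝕜 E F ι : Type*} [NontriviallyNormedField 𝕜]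
    [NormedAddCommGroup E] [NormedSpace 𝕜 E] [CompleteSpace E]
    [AddCommGroup F] [TopologicalSpace F] [T1Space F] [Module 𝕜 F] [Countable ι]
    (T : ι → E →L[𝕜] F) {K : Submodule 𝕜 E} (hK : IsClosed (K : Set E))
    (h : ∀ x ∈ K, ∃ i, T i x = 0) : ∃ i, ∀ x ∈ K, T i x = 0 := by
  have : CompleteSpace K := hK.completeSpace_coe
  obtain ⟨i, hi⟩ := exists_eq_zero_of_forall_exists_apply_eq_zero
    (fun i => (T i).comp K.subtypeL) fun x => h x x.2
  exact ⟨i, fun x hx => congrArg (· ⟨x, hx⟩) hi⟩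

theorem stmt_11_general {H : Type*} [NormedAddCommGroup H] [NormedSpace ℝ H]
    [CompleteSpace H]
    (S : ℝ → H →L[ℝ] H)
    (B : H →L[ℝ] H)
    (hFTS : ∀ x : H, B x = 0 → ∃ T : ℝ, 0 ≤ T ∧ ∀ t : ℝ, T ≤ t → S t x = 0) :
    ∃ n₀ : ℕ, ∀ x : H, B x = 0 → S (n₀ : ℝ) x = 0 := by
  have hvanish : ∀ x ∈ B.ker, ∃ n : ℕ, S n x = 0 := fun x hx => by
    obtain ⟨T, -, hT⟩ := hFTS x hx
    exact ⟨⌈T⌉₊, hT _ (Nat.le_ceil T)⟩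
  exact ContinuousLinearMap.exists_forall_mem_apply_eq_zero_of_isClosed
    (fun n : ℕ => S n) B.isClosed_ker hvanish

/-- If `ker B` is invariant under a semigroup `S(t)` on a Banach (Hilbert) space
and every trajectory starting in `ker B` vanishes after some finite time, then
the restricted semigroup is nilpotent: `S(n₀) x = 0` for all `x ∈ ker B`. -/
theorem stmt_11 {H : Type*} [NormedAddCommGroup H] [NormedSpace ℝ H]
    [CompleteSpace H]
    (S : ℝ → H →L[ℝ] H)
    (hS0 : S 0 = ContinuousLinearMap.id ℝ H)
    (hSsem : ∀ s t : ℝ, 0 ≤ s → 0 ≤ t → S (s + t) = (S s).comp (S t))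
    (B : H →L[ℝ] H)
    (hinv : ∀ t : ℝ, 0 ≤ t → ∀ x : H, B x = 0 → B (S t x) = 0)
    (hFTS : ∀ x : H, B x = 0 → ∃ T : ℝ, 0 ≤ T ∧ ∀ t : ℝ, T ≤ t → S t x = 0) :
    ∃ n₀ : ℕ, ∀ x : H, B x = 0 → S (n₀ : ℝ) x = 0 :=
  stmt_11_general S B hFTS
end

section
/- Let H be a real Hilbert space, A the generator of a contraction C₀-semigroup, B a bounded self-adjoint operator with B ≥ βI on a closed S(t)-invariant subspace F ⊆ (ker B)^⊥ (β > 0). Suppose x : [0,∞) → F is a continuously differentiable solution of ẋ = Ax − ⟨Bx,x⟩^{−μ}Bx (with the nonlinearity set to 0 when x = 0), 0 < μ < 1/2. Then ‖x(t)‖^{2μ} ≤ ‖x(0)‖^{2μ} − 2μβ^{1−μ}t whenever the right-hand side is nonnegative, and x(t) = 0 for all t ≥ ‖x(0)‖^{2μ}/(2μβ^{1−μ}). -/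
open RealInnerProductSpace Classical

/-!
Along a solution, `V = ‖x‖²` satisfies `V' = 2⟪A x, x⟫ - 2⟪B x, x⟫^(1-μ) ≤ -2 β^(1-μ) V^(1-μ)`,
by dissipativity of `A` and coercivity of `B` on `F`. While `V > 0` this makes
`V^μ + 2μ β^(1-μ) t` nonincreasing, and once `V` vanishes it stays zero because `V` is
nonincreasing; so `V^μ` lies below `max (V(0)^μ - 2μ β^(1-μ) t) 0`.
-/

lemma antitoneOn_of_hasDerivAt_nonpos {D : Set ℝ} (hD : Convex ℝ D) {f f' : ℝ → ℝ}
    (hf : ∀ u ∈ D, HasDerivAt f (f' u) u) (hf' : ∀ u ∈ D, f' u ≤ 0) : AntitoneOn f D :=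
  antitoneOn_of_hasDerivWithinAt_nonpos hD
    (fun u hu => (hf u hu).continuousAt.continuousWithinAt)
    (fun u hu => (hf u (interior_subset hu)).hasDerivWithinAt)
    (fun u hu => hf' u (interior_subset hu))

section Comparison

variable {V V' : ℝ → ℝ} {c μ : ℝ}

lemma antitoneOn_Ici_of_hasDerivAt_le_neg_rpow (hc : 0 ≤ c) (hV0 : ∀ u, 0 ≤ u → 0 ≤ V u)
    (hV : ∀ u, 0 ≤ u → HasDerivAt V (V' u) u)
    (hV' : ∀ u, 0 ≤ u → V' u ≤ -c * V u ^ (1 - μ)) :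
    AntitoneOn V (Set.Ici 0) :=
  antitoneOn_of_hasDerivAt_nonpos (convex_Ici 0) hV fun u hu =>
    (hV' u hu).trans <| by
      have := Real.rpow_nonneg (hV0 u hu) (1 - μ)
      nlinarith

lemma rpow_add_mul_le_of_hasDerivAt_le_neg_rpow (hμ : 0 ≤ μ)
    (hV : ∀ u, 0 ≤ u → HasDerivAt V (V' u) u)
    (hV' : ∀ u, 0 ≤ u → V' u ≤ -c * V u ^ (1 - μ))
    {t : ℝ} (ht : 0 ≤ t) (hpos : ∀ s ∈ Set.Icc 0 t, 0 < V s) :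
    V t ^ μ + μ * c * t ≤ V 0 ^ μ := by
  have hderiv : ∀ u ∈ Set.Icc 0 t, HasDerivAt (fun s => V s ^ μ + μ * c * s)
      (V' u * μ * V u ^ (μ - 1) + μ * c) u := fun u hu =>
    ((hV u hu.1).rpow_const (Or.inl (hpos u hu).ne')).add
      ((hasDerivAt_id u).const_mul (μ * c) |>.congr_deriv (mul_one _))
  have hanti := antitoneOn_of_hasDerivAt_nonpos (convex_Icc 0 t) hderiv fun u hu => by
    have hVu := hpos u hu
    have hweight : 0 ≤ μ * V u ^ (μ - 1) := by positivity
    have hcancel : V u ^ (1 - μ) * V u ^ (μ - 1) = 1 := by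
      rw [← Real.rpow_add hVu]; norm_num
    calc V' u * μ * V u ^ (μ - 1) + μ * c
        ≤ -c * V u ^ (1 - μ) * (μ * V u ^ (μ - 1)) + μ * c := by
          nlinarith [mul_le_mul_of_nonneg_right (hV' u hu.1) hweight]
      _ = -(μ * c) * (V u ^ (1 - μ) * V u ^ (μ - 1)) + μ * c := by ring
      _ = 0 := by rw [hcancel]; ring
  simpa using hanti (Set.left_mem_Icc.mpr ht) (Set.right_mem_Icc.mpr ht) ht

/-- Comparison with the extinction profile `(V(0)^μ - μ c t)^(1/μ)` of `v' = -c v^(1-μ)`. -/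
theorem rpow_le_max_of_hasDerivAt_le_neg_rpow (hc : 0 ≤ c) (hμ : 0 < μ)
    (hV0 : ∀ u, 0 ≤ u → 0 ≤ V u) (hV : ∀ u, 0 ≤ u → HasDerivAt V (V' u) u)
    (hV' : ∀ u, 0 ≤ u → V' u ≤ -c * V u ^ (1 - μ)) {t : ℝ} (ht : 0 ≤ t) :
    V t ^ μ ≤ max (V 0 ^ μ - μ * c * t) 0 := by
  by_cases hpos : ∀ s ∈ Set.Icc 0 t, 0 < V s
  · have := rpow_add_mul_le_of_hasDerivAt_le_neg_rpow hμ.le hV hV' ht hpos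
    exact le_max_of_le_left (by linarith)
  · push Not at hpos
    obtain ⟨s, ⟨hs, hst⟩, hVs⟩ := hpos
    have hVt : V t ≤ V s :=
      antitoneOn_Ici_of_hasDerivAt_le_neg_rpow hc hV0 hV hV' hs (hs.trans hst) hst
    have : V t = 0 := le_antisymm (hVt.trans hVs) (hV0 t ht)
    rw [this, Real.zero_rpow hμ.ne']
    exact le_max_right _ _

end Comparison

lemma inner_sub_rpow_smul_le {H : Type*} [NormedAddCommGroup H] [InnerProductSpace ℝ H]
    {a b y : H} {β μ : ℝ} (ha : ⟪a, y⟫ ≤ 0) (hb : β * ‖y‖ ^ 2 ≤ ⟪b, y⟫) (hβ : 0 < β)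
    (hμ : μ < 1) :
    ⟪a - (if y = 0 then (0 : ℝ) else ⟪b, y⟫ ^ (-μ)) • b, y⟫ ≤
      -β ^ (1 - μ) * (‖y‖ ^ 2) ^ (1 - μ) := by
  by_cases hy : y = 0
  · simp [hy, Real.zero_rpow (by linarith : (1 : ℝ) - μ ≠ 0)]
  have hβy : 0 < β * ‖y‖ ^ 2 := by
    have := norm_pos_iff.mpr hy
    positivity
  have hbpos : 0 < ⟪b, y⟫ := hβy.trans_le hb
  have hdamp : ⟪b, y⟫ ^ (-μ) * ⟪b, y⟫ = ⟪b, y⟫ ^ (1 - μ) := by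
    rw [sub_eq_neg_add, Real.rpow_add hbpos, Real.rpow_one]
  have hmono : (β * ‖y‖ ^ 2) ^ (1 - μ) ≤ ⟪b, y⟫ ^ (1 - μ) :=
    Real.rpow_le_rpow hβy.le hb (by linarith)
  rw [Real.mul_rpow hβ.le (by positivity)] at hmono
  rw [if_neg hy, inner_sub_left, real_inner_smul_left, hdamp]
  linarith

theorem stmt_15_general {H : Type*} [NormedAddCommGroup H] [InnerProductSpace ℝ H]
    (A : H →ₗ[ℝ] H) (hdiss : ∀ y : H, ⟪A y, y⟫ ≤ 0)
    (B : H →L[ℝ] H)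
    (F : Submodule ℝ H)
    (β : ℝ) (hβ : 0 < β)
    (hcoer : ∀ y ∈ F, β * ‖y‖ ^ 2 ≤ ⟪B y, y⟫)
    (μ : ℝ) (hμ0 : 0 < μ) (hμ : μ < 1 / 2)
    (x : ℝ → H) (hxF : ∀ t : ℝ, 0 ≤ t → x t ∈ F)
    (hx : ∀ t : ℝ, 0 ≤ t →
      HasDerivAt x
        (A (x t) -
          (if x t = 0 then (0 : ℝ) else ⟪B (x t), x t⟫ ^ (-μ)) • B (x t)) t) :
    (∀ t : ℝ, 0 ≤ t → 0 ≤ ‖x 0‖ ^ (2 * μ) - 2 * μ * β ^ (1 - μ) * t →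
      ‖x t‖ ^ (2 * μ) ≤ ‖x 0‖ ^ (2 * μ) - 2 * μ * β ^ (1 - μ) * t) ∧
    (∀ t : ℝ, ‖x 0‖ ^ (2 * μ) / (2 * μ * β ^ (1 - μ)) ≤ t → x t = 0) := by
  have hK : 0 < 2 * μ * β ^ (1 - μ) := by positivity
  have hμ1 : μ < 1 := by linarith
  have hrpow (y : H) : (‖y‖ ^ 2) ^ μ = ‖y‖ ^ (2 * μ) := by
    rw [Real.rpow_mul (norm_nonneg y), Real.rpow_two]
  have hprofile : ∀ t, 0 ≤ t →
      ‖x t‖ ^ (2 * μ) ≤ max (‖x 0‖ ^ (2 * μ) - 2 * μ * β ^ (1 - μ) * t) 0 := by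
    intro t ht
    have := rpow_le_max_of_hasDerivAt_le_neg_rpow (V := fun s => ‖x s‖ ^ 2)
      (c := 2 * β ^ (1 - μ)) (by positivity) hμ0 (fun u _ => by positivity)
      (fun u hu => (hx u hu).norm_sq)
      (fun u hu => by
        have := inner_sub_rpow_smul_le (hdiss (x u)) (hcoer _ (hxF u hu)) hβ hμ1
        rw [real_inner_comm]
        linarith)
      ht
    simpa only [hrpow, ← mul_assoc, mul_comm μ 2] using this
  refine ⟨fun t ht hnonneg => (hprofile t ht).trans_eq (max_eq_left hnonneg), fun t hT => ?_⟩
  have hT' : ‖x 0‖ ^ (2 * μ) - 2 * μ * β ^ (1 - μ) * t ≤ 0 := by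
    rw [div_le_iff₀ hK] at hT
    linarith
  have ht : 0 ≤ t := (div_nonneg (by positivity) hK.le).trans hT
  by_contra hne
  have := Real.rpow_pos_of_pos (norm_pos_iff.mpr hne) (2 * μ)
  have := hprofile t ht
  rw [max_eq_right hT'] at this
  linarith

/-- Finite-time extinction for the bilinear closed loop
`ẋ = A x - ⟪B x, x⟫^(-μ) B x` on a closed subspace `F ⊆ (ker B)ᗮ` on which the
nonnegative self-adjoint operator `B` is coercive (`B ≥ β I`), with `A`
dissipative: `‖x(t)‖^(2μ) ≤ ‖x(0)‖^(2μ) - 2μ β^(1-μ) t` while the right-hand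
side is nonnegative, and `x(t) = 0` for `t ≥ ‖x(0)‖^(2μ)/(2μ β^(1-μ))`. -/
theorem stmt_15 {H : Type*} [NormedAddCommGroup H] [InnerProductSpace ℝ H]
    (A : H →ₗ[ℝ] H) (hdiss : ∀ y : H, ⟪A y, y⟫ ≤ 0)
    (B : H →L[ℝ] H)
    (hsa : ∀ y z : H, ⟪B y, z⟫ = ⟪y, B z⟫)
    (hpos : ∀ y : H, 0 ≤ ⟪B y, y⟫)
    (F : Submodule ℝ H) (hFclosed : IsClosed (F : Set H))
    (hFperp : F ≤ (LinearMap.ker (B : H →ₗ[ℝ] H))ᗮ)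
    (β : ℝ) (hβ : 0 < β)
    (hcoer : ∀ y ∈ F, β * ‖y‖ ^ 2 ≤ ⟪B y, y⟫)
    (μ : ℝ) (hμ0 : 0 < μ) (hμ : μ < 1 / 2)
    (x : ℝ → H) (hxF : ∀ t : ℝ, 0 ≤ t → x t ∈ F)
    (hx : ∀ t : ℝ, 0 ≤ t →
      HasDerivAt x
        (A (x t) -
          (if x t = 0 then (0 : ℝ) else ⟪B (x t), x t⟫ ^ (-μ)) • B (x t)) t) :
    (∀ t : ℝ, 0 ≤ t → 0 ≤ ‖x 0‖ ^ (2 * μ) - 2 * μ * β ^ (1 - μ) * t →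
      ‖x t‖ ^ (2 * μ) ≤ ‖x 0‖ ^ (2 * μ) - 2 * μ * β ^ (1 - μ) * t) ∧
    (∀ t : ℝ, ‖x 0‖ ^ (2 * μ) / (2 * μ * β ^ (1 - μ)) ≤ t → x t = 0) :=
  stmt_15_general A hdiss B F β hβ hcoer μ hμ0 hμ x hxF hx
end

section
/- Let H be a real Hilbert space, S(t) a contraction C₀-semigroup with generator A, B bounded linear, and z a mild solution of ż = Az − ⟨z, Bz⟩Bz with ‖z(t)‖ ≤ ‖z₀‖ for all t ≥ 0 and ∫₀^∞ ⟨z(s), Bz(s)⟩² ds ≤ ‖z₀‖²/2. Then for every T > 0 there is a constant K = 2T^{3/2}‖B‖²‖z₀‖² + T^{1/2} such that for all t ≥ 0: ∫₀^T |⟨B S(s)z(t), S(s)z(t)⟩| ds ≤ K·(∫_t^{t+T} ⟨z(s), Bz(s)⟩² ds)^{1/2}. -/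
open RealInnerProductSpace MeasureTheory Set

set_option linter.unusedSectionVars false

section BS

variable {H : Type*} [NormedAddCommGroup H] [InnerProductSpace ℝ H] [CompleteSpace H]
variable (S : ℝ → H →L[ℝ] H) (B : H →L[ℝ] H) (z : ℝ → H)

lemma bs_c_cont (hzc : Continuous z) : Continuous fun σ => ⟪z σ, B (z σ)⟫ :=
  Continuous.inner hzc (B.continuous.comp hzc)

lemma bs_c_bound (hznorm : ∀ t : ℝ, 0 ≤ t → ‖z t‖ ≤ ‖z 0‖) {σ : ℝ} (hσ : 0 ≤ σ) :
    |⟪z σ, B (z σ)⟫| ≤ ‖B‖ * ‖z 0‖ ^ 2 := by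
  have h1 : ‖z σ‖ ≤ ‖z 0‖ := hznorm σ hσ
  calc |⟪z σ, B (z σ)⟫| ≤ ‖z σ‖ * ‖B (z σ)‖ := abs_real_inner_le_norm _ _
    _ ≤ ‖z σ‖ * (‖B‖ * ‖z σ‖) := by gcongr; exact B.le_opNorm _
    _ ≤ ‖z 0‖ * (‖B‖ * ‖z 0‖) := by gcongr
    _ = ‖B‖ * ‖z 0‖ ^ 2 := by ring

lemma bs_f_bound (hScontr : ∀ t : ℝ, 0 ≤ t → ∀ y : H, ‖S t y‖ ≤ ‖y‖)
    (hznorm : ∀ t : ℝ, 0 ≤ t → ‖z t‖ ≤ ‖z 0‖) {τ σ : ℝ} (hσ : 0 ≤ σ) (hστ : σ ≤ τ) :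
    ‖⟪z σ, B (z σ)⟫ • S (τ - σ) (B (z σ))‖ ≤ (‖B‖ * ‖z 0‖) * |⟪z σ, B (z σ)⟫| := by
  rw [norm_smul, Real.norm_eq_abs]
  calc |⟪z σ, B (z σ)⟫| * ‖S (τ - σ) (B (z σ))‖
      ≤ |⟪z σ, B (z σ)⟫| * ‖B (z σ)‖ := by
        gcongr; exact hScontr _ (by linarith) _
    _ ≤ |⟪z σ, B (z σ)⟫| * (‖B‖ * ‖z σ‖) := by gcongr; exact B.le_opNorm _
    _ ≤ |⟪z σ, B (z σ)⟫| * (‖B‖ * ‖z 0‖) := by gcongr; exact hznorm σ hσ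
    _ = (‖B‖ * ‖z 0‖) * |⟪z σ, B (z σ)⟫| := by ring

lemma bs_f_bound' (hScontr : ∀ t : ℝ, 0 ≤ t → ∀ y : H, ‖S t y‖ ≤ ‖y‖)
    (hznorm : ∀ t : ℝ, 0 ≤ t → ‖z t‖ ≤ ‖z 0‖) {τ σ : ℝ} (hσ : 0 ≤ σ) (hστ : σ ≤ τ) :
    ‖⟪z σ, B (z σ)⟫ • S (τ - σ) (B (z σ))‖ ≤ ‖B‖ ^ 2 * ‖z 0‖ ^ 3 := by
  have h1 := bs_f_bound S B z hScontr hznorm hσ hστ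
  have h2 := bs_c_bound B z hznorm hσ
  have h3 : (0:ℝ) ≤ ‖B‖ * ‖z 0‖ := by positivity
  nlinarith [norm_nonneg B, norm_nonneg (z 0)]


lemma bs_I_eq (hVCF : ∀ t : ℝ, 0 ≤ t →
      z t = S t (z 0) - ∫ s in (0 : ℝ)..t, ⟪z s, B (z s)⟫ • (S (t - s)) (B (z s)))
    {τ : ℝ} (hτ : 0 ≤ τ) :
    S τ (z 0) - z τ = ∫ σ in (0:ℝ)..τ, ⟪z σ, B (z σ)⟫ • S (τ - σ) (B (z σ)) := by
  rw [hVCF τ hτ]; abel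

lemma bs_SI (hScontr : ∀ t : ℝ, 0 ≤ t → ∀ y : H, ‖S t y‖ ≤ ‖y‖)
    (hznorm : ∀ t : ℝ, 0 ≤ t → ‖z t‖ ≤ ‖z 0‖)
    (hVCF : ∀ t : ℝ, 0 ≤ t →
      z t = S t (z 0) - ∫ s in (0 : ℝ)..t, ⟪z s, B (z s)⟫ • (S (t - s)) (B (z s)))
    {h : ℝ} (hh : 0 ≤ h) :
    ‖S h (z 0) - z 0‖ ≤ ‖z h - z 0‖ + (‖B‖ ^ 2 * ‖z 0‖ ^ 3) * h := by
  have e1 : S h (z 0) - z 0 = (S h (z 0) - z h) + (z h - z 0) := by abel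
  have e2 : ‖S h (z 0) - z h‖ ≤ (‖B‖ ^ 2 * ‖z 0‖ ^ 3) * h := by
    rw [bs_I_eq S B z hVCF hh]
    have := intervalIntegral.norm_integral_le_of_norm_le_const
      (f := fun σ => ⟪z σ, B (z σ)⟫ • S (h - σ) (B (z σ))) (a := 0) (b := h)
      (C := ‖B‖ ^ 2 * ‖z 0‖ ^ 3) ?_
    · calc _ ≤ (‖B‖ ^ 2 * ‖z 0‖ ^ 3) * |h - 0| := this
        _ = (‖B‖ ^ 2 * ‖z 0‖ ^ 3) * h := by rw [sub_zero, abs_of_nonneg hh]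
    · intro x hx
      rw [uIoc_of_le hh] at hx
      exact bs_f_bound' S B z hScontr hznorm (le_of_lt hx.1) hx.2
  calc ‖S h (z 0) - z 0‖ ≤ ‖S h (z 0) - z h‖ + ‖z h - z 0‖ := by
        rw [e1]; exact norm_add_le _ _
    _ ≤ ‖z h - z 0‖ + (‖B‖ ^ 2 * ‖z 0‖ ^ 3) * h := by linarith

lemma bs_orbit (hSsem : ∀ s t : ℝ, 0 ≤ s → 0 ≤ t → S (s + t) = (S s).comp (S t))
    (hScontr : ∀ t : ℝ, 0 ≤ t → ∀ y : H, ‖S t y‖ ≤ ‖y‖)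
    (hznorm : ∀ t : ℝ, 0 ≤ t → ‖z t‖ ≤ ‖z 0‖)
    (hVCF : ∀ t : ℝ, 0 ≤ t →
      z t = S t (z 0) - ∫ s in (0 : ℝ)..t, ⟪z s, B (z s)⟫ • (S (t - s)) (B (z s)))
    {t τ : ℝ} (ht : 0 ≤ t) (htτ : t ≤ τ) :
    ‖S τ (z 0) - S t (z 0)‖ ≤ ‖z (τ - t) - z 0‖ + (‖B‖ ^ 2 * ‖z 0‖ ^ 3) * (τ - t) := by
  have h1 : S τ = (S t).comp (S (τ - t)) := by
    have h2 : t + (τ - t) = τ := by ring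
    have h4 := hSsem t (τ - t) ht (by linarith)
    rwa [h2] at h4
  have h3 : S τ (z 0) - S t (z 0) = S t (S (τ - t) (z 0) - z 0) := by
    rw [h1, map_sub]; rfl
  rw [h3]
  calc ‖S t (S (τ - t) (z 0) - z 0)‖ ≤ ‖S (τ - t) (z 0) - z 0‖ := hScontr t ht _
    _ ≤ _ := bs_SI S B z hScontr hznorm hVCF (by linarith)

lemma bs_Icont (hSsem : ∀ s t : ℝ, 0 ≤ s → 0 ≤ t → S (s + t) = (S s).comp (S t))
    (hScontr : ∀ t : ℝ, 0 ≤ t → ∀ y : H, ‖S t y‖ ≤ ‖y‖)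
    (hzc : Continuous z)
    (hznorm : ∀ t : ℝ, 0 ≤ t → ‖z t‖ ≤ ‖z 0‖)
    (hVCF : ∀ t : ℝ, 0 ≤ t →
      z t = S t (z 0) - ∫ s in (0 : ℝ)..t, ⟪z s, B (z s)⟫ • (S (t - s)) (B (z s)))
    {t : ℝ} (ht : 0 ≤ t) {ε : ℝ} (hε : 0 < ε) :
    ∃ δ > 0, ∀ τ : ℝ, 0 ≤ τ → |τ - t| < δ →
      ‖(S τ (z 0) - z τ) - (S t (z 0) - z t)‖ < ε := by
  set C := ‖B‖ ^ 2 * ‖z 0‖ ^ 3 with hC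
  have hC0 : 0 ≤ C := by positivity
  obtain ⟨δ₁, hδ₁pos, hδ₁⟩ := Metric.continuous_iff.mp hzc 0 (ε/4) (by linarith)
  obtain ⟨δ₂, hδ₂pos, hδ₂⟩ := Metric.continuous_iff.mp hzc t (ε/4) (by linarith)
  refine ⟨min δ₁ (min δ₂ (ε / (4 * (C + 1)))), by positivity, fun τ hτ hτt => ?_⟩
  have hd1 : |τ - t| < δ₁ := lt_of_lt_of_le hτt (min_le_left _ _)
  have hd2 : |τ - t| < δ₂ := lt_of_lt_of_le hτt ((min_le_right _ _).trans (min_le_left _ _))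
  have hd3 : |τ - t| < ε / (4 * (C + 1)) :=
    lt_of_lt_of_le hτt ((min_le_right _ _).trans (min_le_right _ _))
  have hz1 : ‖z |τ - t| - z 0‖ < ε / 4 := by
    have := hδ₁ |τ - t| (by rw [Real.dist_eq, sub_zero, abs_abs]; exact hd1)
    rwa [dist_eq_norm] at this
  have hz2 : ‖z τ - z t‖ < ε / 4 := by
    have := hδ₂ τ (by rwa [Real.dist_eq]); rwa [dist_eq_norm] at this
  have hS : ‖S τ (z 0) - S t (z 0)‖ ≤ ‖z |τ - t| - z 0‖ + C * |τ - t| := by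
    rcases le_total t τ with h | h
    · have := bs_orbit S B z hSsem hScontr hznorm hVCF ht h
      rwa [abs_of_nonneg (by linarith : (0:ℝ) ≤ τ - t)]
    · have := bs_orbit S B z hSsem hScontr hznorm hVCF hτ h
      rw [abs_of_nonpos (by linarith : τ - t ≤ 0)]
      calc ‖S τ (z 0) - S t (z 0)‖ = ‖S t (z 0) - S τ (z 0)‖ := norm_sub_rev _ _
        _ ≤ ‖z (t - τ) - z 0‖ + C * (t - τ) := this
        _ = ‖z (-(τ - t)) - z 0‖ + C * (-(τ - t)) := by norm_num
  have hCd : C * |τ - t| ≤ ε / 4 := by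
    have h1 : C * |τ - t| ≤ (C + 1) * (ε / (4 * (C + 1))) := by
      have := abs_nonneg (τ - t); nlinarith
    have h2 : (C + 1) * (ε / (4 * (C + 1))) = ε / 4 := by field_simp
    linarith
  calc ‖(S τ (z 0) - z τ) - (S t (z 0) - z t)‖
      ≤ ‖S τ (z 0) - S t (z 0)‖ + ‖z τ - z t‖ := by
        have : (S τ (z 0) - z τ) - (S t (z 0) - z t)
            = (S τ (z 0) - S t (z 0)) - (z τ - z t) := by abel
        rw [this]; exact norm_sub_le _ _
    _ < ε := by linarith


lemma bs_absc_intble (hzc : Continuous z) (a b : ℝ) :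
    IntervalIntegrable (fun σ => |⟪z σ, B (z σ)⟫|) volume a b :=
  ((bs_c_cont B z hzc).abs).intervalIntegrable a b

lemma bs_absc_nonneg (hzc : Continuous z) {a b : ℝ} (hab : a ≤ b) :
    0 ≤ ∫ σ in a..b, |⟪z σ, B (z σ)⟫| :=
  intervalIntegral.integral_nonneg hab (fun σ _ => abs_nonneg _)

/-- monotonicity of `∫ |c|` under enlarging the interval on both sides -/
lemma bs_mono (hzc : Continuous z) {p q u v : ℝ} (hpq : p ≤ q) (hqu : q ≤ u) (huv : u ≤ v) :
    (∫ σ in q..u, |⟪z σ, B (z σ)⟫|) ≤ ∫ σ in p..v, |⟪z σ, B (z σ)⟫| := by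
  have h1 := intervalIntegral.integral_add_adjacent_intervals
    (bs_absc_intble B z hzc p q) (bs_absc_intble B z hzc q u)
  have h2 := intervalIntegral.integral_add_adjacent_intervals
    (bs_absc_intble B z hzc p u) (bs_absc_intble B z hzc u v)
  have h3 := bs_absc_nonneg B z hzc hpq
  have h4 := bs_absc_nonneg B z hzc huv
  linarith

/-- Cauchy–Schwarz: `∫ₐᵇ |c| ≤ √(b−a)·√(∫ₐᵇ c²)` -/
lemma bs_CS (hzc : Continuous z) {a b : ℝ} (hab : a ≤ b) :
    (∫ σ in a..b, |⟪z σ, B (z σ)⟫|) ≤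
      Real.sqrt (b - a) * Real.sqrt (∫ σ in a..b, ⟪z σ, B (z σ)⟫ ^ 2) := by
  set c : ℝ → ℝ := fun σ => ⟪z σ, B (z σ)⟫ with hc
  have hccont : Continuous c := bs_c_cont B z hzc
  set A := ∫ σ in a..b, |c σ| with hA
  set Q := ∫ σ in a..b, (c σ) ^ 2 with hQ
  have hA0 : 0 ≤ A := bs_absc_nonneg B z hzc hab
  have hQ0 : 0 ≤ Q := intervalIntegral.integral_nonneg hab (fun σ _ => sq_nonneg _)
  have key : A ^ 2 ≤ (b - a) * Q := by
    rcases eq_or_lt_of_le hab with h | h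
    · subst h
      simp [hA, hQ]
    · set L := b - a with hL
      have hL0 : 0 < L := by simp [hL]; linarith
      set lam := A / L with hlam
      have hnn : 0 ≤ ∫ σ in a..b, (|c σ| - lam) ^ 2 :=
        intervalIntegral.integral_nonneg hab (fun σ _ => sq_nonneg _)
      have hexp : ∀ σ : ℝ, (|c σ| - lam) ^ 2 = (c σ) ^ 2 - (2 * lam) * |c σ| + lam ^ 2 := by
        intro σ
        have : |c σ| ^ 2 = (c σ) ^ 2 := sq_abs _
        nlinarith [this]
      have hint1 : IntervalIntegrable (fun σ => (c σ) ^ 2) volume a b :=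
        ((hccont.pow 2)).intervalIntegrable a b
      have hint2 : IntervalIntegrable (fun σ => (2 * lam) * |c σ|) volume a b :=
        (bs_absc_intble B z hzc a b).const_mul _
      have heq : (∫ σ in a..b, (|c σ| - lam) ^ 2)
          = Q - (2 * lam) * A + lam ^ 2 * L := by
        calc (∫ σ in a..b, (|c σ| - lam) ^ 2)
            = ∫ σ in a..b, ((c σ) ^ 2 - (2 * lam) * |c σ| + lam ^ 2) := by
              apply intervalIntegral.integral_congr
              intro σ _
              exact hexp σ
          _ = (∫ σ in a..b, ((c σ) ^ 2 - (2 * lam) * |c σ|)) + ∫ σ in a..b, (lam ^ 2 : ℝ) := by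
              apply intervalIntegral.integral_add (hint1.sub hint2)
                (intervalIntegrable_const)
          _ = Q - (2 * lam) * A + lam ^ 2 * L := by
              rw [intervalIntegral.integral_sub hint1 hint2,
                intervalIntegral.integral_const_mul, intervalIntegral.integral_const]
              simp [hQ, hA, hL, smul_eq_mul, mul_comm]
      rw [heq] at hnn
      have : lam = A / L := hlam
      have h2 : Q - 2 * (A / L) * A + (A / L) ^ 2 * L ≥ 0 := by
        rw [this] at hnn; linarith
      have h3 : (A / L) ^ 2 * L = A ^ 2 / L := by field_simp
      have h4 : 2 * (A / L) * A = 2 * (A ^ 2 / L) := by field_simp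
      rw [h3, h4] at h2
      have h5 : Q ≥ A ^ 2 / L := by linarith
      calc A ^ 2 = (A ^ 2 / L) * L := by field_simp
        _ ≤ Q * L := by nlinarith
        _ = L * Q := by ring
  calc A = Real.sqrt (A ^ 2) := (Real.sqrt_sq hA0).symm
    _ ≤ Real.sqrt ((b - a) * Q) := Real.sqrt_le_sqrt key
    _ = Real.sqrt (b - a) * Real.sqrt Q := Real.sqrt_mul (by linarith) _


/-- Step A: both integrands integrable. -/
lemma bs_A (hSsem : ∀ s t : ℝ, 0 ≤ s → 0 ≤ t → S (s + t) = (S s).comp (S t))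
    (hScontr : ∀ t : ℝ, 0 ≤ t → ∀ y : H, ‖S t y‖ ≤ ‖y‖)
    (hzc : Continuous z)
    (hznorm : ∀ t : ℝ, 0 ≤ t → ‖z t‖ ≤ ‖z 0‖)
    (hVCF : ∀ t : ℝ, 0 ≤ t →
      z t = S t (z 0) - ∫ s in (0 : ℝ)..t, ⟪z s, B (z s)⟫ • (S (t - s)) (B (z s)))
    {t s : ℝ} (ht : 0 ≤ t) (hs : 0 ≤ s)
    (hft : IntervalIntegrable (fun σ => ⟪z σ, B (z σ)⟫ • S (t - σ) (B (z σ))) volume 0 t)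
    (hfts : IntervalIntegrable (fun σ => ⟪z σ, B (z σ)⟫ • S (t + s - σ) (B (z σ)))
      volume 0 (t + s)) :
    ‖S s (S t (z 0) - z t) - (S (t + s) (z 0) - z (t + s))‖ ≤
      (‖B‖ * ‖z 0‖) * ∫ σ in t..t + s, |⟪z σ, B (z σ)⟫| := by
  have hsub1 : uIcc (0:ℝ) t ⊆ uIcc (0:ℝ) (t + s) := by
    rw [uIcc_of_le ht, uIcc_of_le (by linarith)]
    exact Icc_subset_Icc le_rfl (by linarith)
  have hsub2 : uIcc t (t + s) ⊆ uIcc (0:ℝ) (t + s) := by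
    rw [uIcc_of_le (by linarith : t ≤ t + s), uIcc_of_le (by linarith)]
    exact Icc_subset_Icc ht le_rfl
  have h1 : IntervalIntegrable (fun σ => ⟪z σ, B (z σ)⟫ • S (t + s - σ) (B (z σ)))
      volume 0 t := hfts.mono_set hsub1
  have h2 : IntervalIntegrable (fun σ => ⟪z σ, B (z σ)⟫ • S (t + s - σ) (B (z σ)))
      volume t (t + s) := hfts.mono_set hsub2
  have hsplit : (∫ σ in (0:ℝ)..t + s, ⟪z σ, B (z σ)⟫ • S (t + s - σ) (B (z σ)))
      = (∫ σ in (0:ℝ)..t, ⟪z σ, B (z σ)⟫ • S (t + s - σ) (B (z σ)))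
        + ∫ σ in t..t + s, ⟪z σ, B (z σ)⟫ • S (t + s - σ) (B (z σ)) :=
    (intervalIntegral.integral_add_adjacent_intervals h1 h2).symm
  have hcongr : (∫ σ in (0:ℝ)..t, ⟪z σ, B (z σ)⟫ • S (t + s - σ) (B (z σ)))
      = ∫ σ in (0:ℝ)..t, S s (⟪z σ, B (z σ)⟫ • S (t - σ) (B (z σ))) := by
    apply intervalIntegral.integral_congr
    intro σ hσ
    rw [uIcc_of_le ht] at hσ
    have e1 : t + s - σ = s + (t - σ) := by ring
    have e2 := hSsem s (t - σ) hs (by linarith [hσ.2])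
    show ⟪z σ, B (z σ)⟫ • S (t + s - σ) (B (z σ)) = S s (⟪z σ, B (z σ)⟫ • S (t - σ) (B (z σ)))
    rw [e1, e2, (S s).map_smul]
    rfl
  have hcomm : (∫ σ in (0:ℝ)..t, S s (⟪z σ, B (z σ)⟫ • S (t - σ) (B (z σ))))
      = S s (∫ σ in (0:ℝ)..t, ⟪z σ, B (z σ)⟫ • S (t - σ) (B (z σ))) :=
    (S s).intervalIntegral_comp_comm hft
  have hIt := bs_I_eq S B z hVCF ht
  have hIts := bs_I_eq S B z hVCF (show (0:ℝ) ≤ t + s by linarith)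
  have hkey : S s (S t (z 0) - z t) - (S (t + s) (z 0) - z (t + s))
      = -(∫ σ in t..t + s, ⟪z σ, B (z σ)⟫ • S (t + s - σ) (B (z σ))) := by
    rw [hIt, hIts, hsplit, hcongr, hcomm]
    abel
  rw [hkey, norm_neg]
  calc ‖∫ σ in t..t + s, ⟪z σ, B (z σ)⟫ • S (t + s - σ) (B (z σ))‖
      ≤ ∫ σ in t..t + s, ‖⟪z σ, B (z σ)⟫ • S (t + s - σ) (B (z σ))‖ :=
        intervalIntegral.norm_integral_le_integral_norm (by linarith)
    _ ≤ ∫ σ in t..t + s, (‖B‖ * ‖z 0‖) * |⟪z σ, B (z σ)⟫| := by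
        apply intervalIntegral.integral_mono_on (by linarith) h2.norm
          ((bs_absc_intble B z hzc t (t + s)).const_mul _)
        intro σ hσ
        exact bs_f_bound S B z hScontr hznorm (le_trans ht hσ.1) (by linarith [hσ.2])
    _ = (‖B‖ * ‖z 0‖) * ∫ σ in t..t + s, |⟪z σ, B (z σ)⟫| :=
        intervalIntegral.integral_const_mul _ _


/-- Step B: only the base integrand assumed integrable. -/
lemma bs_B (hSsem : ∀ s t : ℝ, 0 ≤ s → 0 ≤ t → S (s + t) = (S s).comp (S t))
    (hScontr : ∀ t : ℝ, 0 ≤ t → ∀ y : H, ‖S t y‖ ≤ ‖y‖)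
    (hzc : Continuous z)
    (hznorm : ∀ t : ℝ, 0 ≤ t → ‖z t‖ ≤ ‖z 0‖)
    (hVCF : ∀ t : ℝ, 0 ≤ t →
      z t = S t (z 0) - ∫ s in (0 : ℝ)..t, ⟪z s, B (z s)⟫ • (S (t - s)) (B (z s)))
    {t s : ℝ} (ht : 0 ≤ t) (hs : 0 ≤ s)
    (hft : IntervalIntegrable (fun σ => ⟪z σ, B (z σ)⟫ • S (t - σ) (B (z σ))) volume 0 t) :
    ‖S s (S t (z 0) - z t) - (S (t + s) (z 0) - z (t + s))‖ ≤
      (‖B‖ * ‖z 0‖) * ∫ σ in t..t + s, |⟪z σ, B (z σ)⟫| := by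
  by_cases hfts : IntervalIntegrable (fun σ => ⟪z σ, B (z σ)⟫ • S (t + s - σ) (B (z σ)))
      volume 0 (t + s)
  · exact bs_A S B z hSsem hScontr hzc hznorm hVCF ht hs hft hfts
  · -- the integral at t+s is junk zero, i.e. I (t+s) = 0
    have hI0 : S (t + s) (z 0) - z (t + s) = 0 := by
      rw [bs_I_eq S B z hVCF (show (0:ℝ) ≤ t + s by linarith)]
      exact intervalIntegral.integral_undef hfts
    rw [hI0, sub_zero]
    -- the set of good parameters
    set P : Set ℝ := {s' | s' ∈ Icc 0 s ∧
      IntervalIntegrable (fun σ => ⟪z σ, B (z σ)⟫ • S (t + s' - σ) (B (z σ)))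
        volume 0 (t + s')} with hP
    have hP0 : (0:ℝ) ∈ P := by
      constructor
      · exact ⟨le_rfl, hs⟩
      · simpa using hft
    have hPbdd : BddAbove P := ⟨s, fun x hx => hx.1.2⟩
    set b := sSup P with hb
    have hb0 : 0 ≤ b := le_csSup hPbdd hP0
    have hbs : b ≤ s := csSup_le ⟨0, hP0⟩ (fun x hx => hx.1.2)
    -- I (t + b) = 0
    have hIb : S (t + b) (z 0) - z (t + b) = 0 := by
      have hzero : ∀ s' : ℝ, b < s' → s' ≤ s → S (t + s') (z 0) - z (t + s') = 0 := by
        intro s' hbs' hs's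
        have hs'P : s' ∉ P := fun hmem => absurd (le_csSup hPbdd hmem) (not_le.mpr hbs')
        have : ¬ IntervalIntegrable (fun σ => ⟪z σ, B (z σ)⟫ • S (t + s' - σ) (B (z σ)))
            volume 0 (t + s') := by
          intro hint
          exact hs'P ⟨⟨by linarith, hs's⟩, hint⟩
        rw [bs_I_eq S B z hVCF (show (0:ℝ) ≤ t + s' by linarith)]
        exact intervalIntegral.integral_undef this
      rcases eq_or_lt_of_le hbs with h | h
      · rw [h] at *; exact hI0
      · -- b < s : approximate from the right
        have : ∀ ε > (0:ℝ), ‖S (t + b) (z 0) - z (t + b)‖ < ε := by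
          intro ε hε
          obtain ⟨δ, hδpos, hδ⟩ := bs_Icont S B z hSsem hScontr hzc hznorm hVCF
            (show (0:ℝ) ≤ t + b by linarith) hε
          set s' := min s (b + δ/2) with hs'
          have hs'1 : b < s' := by
            apply lt_min h; linarith
          have hs'2 : s' ≤ s := min_le_left _ _
          have hzero' := hzero s' hs'1 hs'2
          have : ‖(S (t + s') (z 0) - z (t + s')) - (S (t + b) (z 0) - z (t + b))‖ < ε := by
            apply hδ (t + s') (by linarith [hs'1])
            have : |t + s' - (t + b)| = s' - b := by
              rw [abs_of_nonneg (by linarith)]; ring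
            rw [this]
            have : s' ≤ b + δ/2 := min_le_right _ _
            linarith
          rwa [hzero', zero_sub, norm_neg] at this
        have hnorm0 : ‖S (t + b) (z 0) - z (t + b)‖ ≤ 0 := by
          by_contra hcon
          push_neg at hcon
          exact absurd (this _ hcon) (lt_irrefl _)
        simpa using norm_le_zero_iff.mp hnorm0
    -- main estimate by approximating b from below inside P
    apply le_of_forall_pos_le_add
    intro ε hε
    obtain ⟨δ, hδpos, hδ⟩ := bs_Icont S B z hSsem hScontr hzc hznorm hVCF
      (show (0:ℝ) ≤ t + b by linarith) hε
    obtain ⟨s', hs'P, hs'lt⟩ := exists_lt_of_lt_csSup ⟨0, hP0⟩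
      (show b - δ/2 < b by linarith)
    have hs'le : s' ≤ b := le_csSup hPbdd hs'P
    have hs'0 : 0 ≤ s' := hs'P.1.1
    have hs's : s' ≤ s := hs'P.1.2
    -- Step A applies at (t, s')
    have hA := bs_A S B z hSsem hScontr hzc hznorm hVCF ht hs'0 hft hs'P.2
    -- the I-value at t + s' is small
    have hsmall : ‖S (t + s') (z 0) - z (t + s')‖ < ε := by
      have := hδ (t + s') (by linarith)
        (by rw [show t + s' - (t + b) = -(b - s') by ring, abs_neg,
              abs_of_nonneg (by linarith)]; linarith)
      rwa [hIb, sub_zero] at this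
    -- contraction trick : ‖S s v‖ ≤ ‖S s' v‖
    have hcontr2 : ∀ v : H, ‖S s v‖ ≤ ‖S s' v‖ := by
      intro v
      have h1 : s = (s - s') + s' := by ring
      have h2 := hSsem (s - s') s' (by linarith) hs'0
      calc ‖S s v‖ = ‖S ((s - s') + s') v‖ := by rw [← h1]
        _ = ‖S (s - s') (S s' v)‖ := by rw [h2]; rfl
        _ ≤ ‖S s' v‖ := hScontr _ (by linarith) _
    calc ‖S s (S t (z 0) - z t)‖ ≤ ‖S s' (S t (z 0) - z t)‖ := hcontr2 _
      _ ≤ ‖S (t + s') (z 0) - z (t + s')‖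
            + ‖S s' (S t (z 0) - z t) - (S (t + s') (z 0) - z (t + s'))‖ :=
          norm_le_norm_add_norm_sub' _ _
      _ ≤ (‖B‖ * ‖z 0‖) * (∫ σ in t..t + s', |⟪z σ, B (z σ)⟫|) + ε := by
          have := hA
          have hε' := le_of_lt hsmall
          linarith
      _ ≤ (‖B‖ * ‖z 0‖) * (∫ σ in t..t + s, |⟪z σ, B (z σ)⟫|) + ε := by
          have hmono := bs_mono B z hzc (le_refl t) (by linarith : t ≤ t + s')
            (by linarith : t + s' ≤ t + s)
          have hBz : (0:ℝ) ≤ ‖B‖ * ‖z 0‖ := by positivity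
          nlinarith


/-- Step C: no integrability assumptions. -/
lemma bs_C (hSsem : ∀ s t : ℝ, 0 ≤ s → 0 ≤ t → S (s + t) = (S s).comp (S t))
    (hScontr : ∀ t : ℝ, 0 ≤ t → ∀ y : H, ‖S t y‖ ≤ ‖y‖)
    (hzc : Continuous z)
    (hznorm : ∀ t : ℝ, 0 ≤ t → ‖z t‖ ≤ ‖z 0‖)
    (hVCF : ∀ t : ℝ, 0 ≤ t →
      z t = S t (z 0) - ∫ s in (0 : ℝ)..t, ⟪z s, B (z s)⟫ • (S (t - s)) (B (z s)))
    {t s : ℝ} (ht : 0 ≤ t) (hs : 0 ≤ s) :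
    ‖S s (S t (z 0) - z t) - (S (t + s) (z 0) - z (t + s))‖ ≤
      (‖B‖ * ‖z 0‖) * ∫ σ in t..t + s, |⟪z σ, B (z σ)⟫| := by
  by_cases hft : IntervalIntegrable (fun σ => ⟪z σ, B (z σ)⟫ • S (t - σ) (B (z σ))) volume 0 t
  · exact bs_B S B z hSsem hScontr hzc hznorm hVCF ht hs hft
  · have hIt : S t (z 0) - z t = 0 := by
      rw [bs_I_eq S B z hVCF ht]
      exact intervalIntegral.integral_undef hft
    rw [hIt, map_zero, zero_sub, norm_neg]
    have hRHS0 : 0 ≤ (‖B‖ * ‖z 0‖) * ∫ σ in t..t + s, |⟪z σ, B (z σ)⟫| := by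
      have := bs_absc_nonneg B z hzc (show t ≤ t + s by linarith)
      positivity
    by_cases hfts : IntervalIntegrable (fun σ => ⟪z σ, B (z σ)⟫ • S (t + s - σ) (B (z σ)))
        volume 0 (t + s)
    · -- approximate the infimum of good parameters from the right
      set P : Set ℝ := {s' | s' ∈ Icc 0 s ∧
        IntervalIntegrable (fun σ => ⟪z σ, B (z σ)⟫ • S (t + s' - σ) (B (z σ)))
          volume 0 (t + s')} with hP
      have hPs : s ∈ P := ⟨⟨hs, le_rfl⟩, hfts⟩
      have hPbdd : BddBelow P := ⟨0, fun x hx => hx.1.1⟩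
      set a := sInf P with ha
      have ha0 : 0 ≤ a := le_csInf ⟨s, hPs⟩ (fun x hx => hx.1.1)
      have has : a ≤ s := csInf_le hPbdd hPs
      -- I (t + a) = 0
      have hIa : S (t + a) (z 0) - z (t + a) = 0 := by
        have hzero : ∀ s' : ℝ, 0 ≤ s' → s' < a → S (t + s') (z 0) - z (t + s') = 0 := by
          intro s' hs'0 hs'a
          have hs'P : s' ∉ P := fun hmem => absurd (csInf_le hPbdd hmem) (not_le.mpr hs'a)
          have hni : ¬ IntervalIntegrable
              (fun σ => ⟪z σ, B (z σ)⟫ • S (t + s' - σ) (B (z σ))) volume 0 (t + s') := by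
            intro hint
            exact hs'P ⟨⟨hs'0, by linarith⟩, hint⟩
          rw [bs_I_eq S B z hVCF (show (0:ℝ) ≤ t + s' by linarith)]
          exact intervalIntegral.integral_undef hni
        rcases eq_or_lt_of_le ha0 with h | h
        · rw [← h, add_zero]; exact hIt
        · have : ∀ ε > (0:ℝ), ‖S (t + a) (z 0) - z (t + a)‖ < ε := by
            intro ε hε
            obtain ⟨δ, hδpos, hδ⟩ := bs_Icont S B z hSsem hScontr hzc hznorm hVCF
              (show (0:ℝ) ≤ t + a by linarith) hε
            set s' := max 0 (a - δ/2) with hs'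
            have hs'0 : 0 ≤ s' := le_max_left _ _
            have hs'a : s' < a := by
              apply max_lt h; linarith
            have hzero' := hzero s' hs'0 hs'a
            have hclose : |t + s' - (t + a)| < δ := by
              rw [show t + s' - (t + a) = -(a - s') by ring, abs_neg,
                abs_of_nonneg (by linarith)]
              have : a - δ/2 ≤ s' := le_max_right _ _
              linarith
            have := hδ (t + s') (by linarith) hclose
            rwa [hzero', zero_sub, norm_neg] at this
          have hnorm0 : ‖S (t + a) (z 0) - z (t + a)‖ ≤ 0 := by
            by_contra hcon
            push_neg at hcon
            exact absurd (this _ hcon) (lt_irrefl _)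
          simpa using norm_le_zero_iff.mp hnorm0
      apply le_of_forall_pos_le_add
      intro ε hε
      obtain ⟨δ, hδpos, hδ⟩ := bs_Icont S B z hSsem hScontr hzc hznorm hVCF
        (show (0:ℝ) ≤ t + a by linarith) hε
      obtain ⟨s', hs'P, hs'lt⟩ := exists_lt_of_csInf_lt ⟨s, hPs⟩
        (show a < a + δ/2 by linarith)
      have hs'ge : a ≤ s' := csInf_le hPbdd hs'P
      have hs'0 : 0 ≤ s' := hs'P.1.1
      have hs's : s' ≤ s := hs'P.1.2
      -- I at t + s' is small
      have hsmall : ‖S (t + s') (z 0) - z (t + s')‖ < ε := by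
        have := hδ (t + s') (by linarith)
          (by rw [abs_of_nonneg (by linarith : (0:ℝ) ≤ t + s' - (t + a))]; linarith)
        rwa [hIa, sub_zero] at this
      -- step B from base point t + s' with increment s - s'
      have hB := bs_B S B z hSsem hScontr hzc hznorm hVCF
        (show (0:ℝ) ≤ t + s' by linarith) (show (0:ℝ) ≤ s - s' by linarith) hs'P.2
      rw [show t + s' + (s - s') = t + s by ring] at hB
      calc ‖S (t + s) (z 0) - z (t + s)‖
          ≤ ‖S (s - s') (S (t + s') (z 0) - z (t + s'))‖
              + ‖S (s - s') (S (t + s') (z 0) - z (t + s')) - (S (t + s) (z 0) - z (t + s))‖ := by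
            exact norm_le_norm_add_norm_sub _ _
        _ ≤ ε + (‖B‖ * ‖z 0‖) * ∫ σ in t..t + s, |⟪z σ, B (z σ)⟫| := by
            have h1 : ‖S (s - s') (S (t + s') (z 0) - z (t + s'))‖
                ≤ ‖S (t + s') (z 0) - z (t + s')‖ := hScontr _ (by linarith) _
            have h2 : (∫ σ in t + s'..t + s, |⟪z σ, B (z σ)⟫|)
                ≤ ∫ σ in t..t + s, |⟪z σ, B (z σ)⟫| :=
              bs_mono B z hzc (by linarith : t ≤ t + s') (by linarith : t + s' ≤ t + s)
                le_rfl
            have hBz : (0:ℝ) ≤ ‖B‖ * ‖z 0‖ := by positivity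
            nlinarith [hB, hsmall]
        _ = (‖B‖ * ‖z 0‖) * (∫ σ in t..t + s, |⟪z σ, B (z σ)⟫|) + ε := by ring
    · rw [bs_I_eq S B z hVCF (show (0:ℝ) ≤ t + s by linarith),
        intervalIntegral.integral_undef hfts, norm_zero]
      exact hRHS0

end BS

/-- Key estimate for weak stabilization (Ball–Slemrod): if `z` is the mild
solution of `ż = A z − ⟪z, Bz⟫ B z` given by the variation of constants
formula, with `S(t)` a contraction semigroup, `‖z(t)‖ ≤ ‖z₀‖` and
`∫₀^∞ ⟪z, Bz⟫² ≤ ‖z₀‖²/2`, then for every `T > 0`, setting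
`K = 2 T^{3/2} ‖B‖² ‖z₀‖² + T^{1/2}`,
`∫₀ᵀ |⟪B S(s) z(t), S(s) z(t)⟫| ds ≤ K (∫ₜ^{t+T} ⟪z, Bz⟫² ds)^{1/2}`
for all `t ≥ 0`. -/
theorem stmt_19 {H : Type*} [NormedAddCommGroup H] [InnerProductSpace ℝ H]
    [CompleteSpace H]
    (S : ℝ → H →L[ℝ] H)
    (hS0 : S 0 = ContinuousLinearMap.id ℝ H)
    (hSsem : ∀ s t : ℝ, 0 ≤ s → 0 ≤ t → S (s + t) = (S s).comp (S t))
    (hScontr : ∀ t : ℝ, 0 ≤ t → ∀ y : H, ‖S t y‖ ≤ ‖y‖)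
    (B : H →L[ℝ] H) (z : ℝ → H) (hzc : Continuous z)
    (hznorm : ∀ t : ℝ, 0 ≤ t → ‖z t‖ ≤ ‖z 0‖)
    (hzint : ∫ s in Ici (0 : ℝ), ⟪z s, B (z s)⟫ ^ 2 ≤ ‖z 0‖ ^ 2 / 2)
    (hVCF : ∀ t : ℝ, 0 ≤ t →
      z t = S t (z 0) -
        ∫ s in (0 : ℝ)..t, ⟪z s, B (z s)⟫ • (S (t - s)) (B (z s)))
    (T : ℝ) (hT : 0 < T) :
    ∀ t : ℝ, 0 ≤ t →
      (∫ s in (0 : ℝ)..T, |⟪B (S s (z t)), S s (z t)⟫|) ≤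
        (2 * T ^ ((3 : ℝ) / 2) * ‖B‖ ^ 2 * ‖z 0‖ ^ 2 + T ^ ((1 : ℝ) / 2)) *
          Real.sqrt (∫ s in t..(t + T), ⟪z s, B (z s)⟫ ^ 2) := by
  intro t ht
  set E := Real.sqrt (∫ s in t..(t + T), ⟪z s, B (z s)⟫ ^ 2) with hE
  have hE0 : 0 ≤ E := Real.sqrt_nonneg _
  have hB0 : (0:ℝ) ≤ ‖B‖ := norm_nonneg _
  have hR0 : (0:ℝ) ≤ ‖z 0‖ := norm_nonneg _
  set D : ℝ := 2 * ‖B‖ ^ 2 * ‖z 0‖ ^ 2 * (Real.sqrt T * E) with hD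
  have hD0 : 0 ≤ D := by positivity
  -- Cauchy–Schwarz on [t, t+T]
  have hcs : (∫ σ in t..t + T, |⟪z σ, B (z σ)⟫|) ≤ Real.sqrt T * E := by
    have h := bs_CS B z hzc (show t ≤ t + T by linarith)
    rwa [show t + T - t = T by ring] at h
  -- pointwise estimate
  have hpt : ∀ s ∈ Icc (0:ℝ) T,
      |⟪B (S s (z t)), S s (z t)⟫| ≤ |⟪z (t + s), B (z (t + s))⟫| + D := by
    intro s hsmem
    obtain ⟨hs0, hsT⟩ := hsmem
    set x := S s (z t) with hx
    set y := z (t + s) with hy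
    have hxy : ‖x - y‖ ≤ ‖B‖ * ‖z 0‖ * (Real.sqrt T * E) := by
      have e : S s (S t (z 0)) = S (t + s) (z 0) := by
        rw [show t + s = s + t by ring, hSsem s t hs0 ht]; rfl
      have hid : x - y = -(S s (S t (z 0) - z t) - (S (t + s) (z 0) - z (t + s))) := by
        rw [map_sub, e, hx, hy]; abel
      have h1 := bs_C S B z hSsem hScontr hzc hznorm hVCF ht hs0
      have h2 : (∫ σ in t..t + s, |⟪z σ, B (z σ)⟫|) ≤ ∫ σ in t..t + T, |⟪z σ, B (z σ)⟫| :=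
        bs_mono B z hzc le_rfl (by linarith) (by linarith)
      rw [hid, norm_neg] at *
      calc ‖S s (S t (z 0) - z t) - (S (t + s) (z 0) - z (t + s))‖
          ≤ (‖B‖ * ‖z 0‖) * ∫ σ in t..t + s, |⟪z σ, B (z σ)⟫| := h1
        _ ≤ (‖B‖ * ‖z 0‖) * ∫ σ in t..t + T, |⟪z σ, B (z σ)⟫| := by
            apply mul_le_mul_of_nonneg_left h2 (by positivity)
        _ ≤ ‖B‖ * ‖z 0‖ * (Real.sqrt T * E) := by
            apply mul_le_mul_of_nonneg_left hcs (by positivity)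
    have hxn : ‖x‖ ≤ ‖z 0‖ := le_trans (hScontr s hs0 _) (hznorm t ht)
    have hyn : ‖y‖ ≤ ‖z 0‖ := hznorm _ (by linarith)
    have hsplit : ⟪B x, x⟫ - ⟪B y, y⟫ = ⟪B (x - y), x⟫ + ⟪B y, x - y⟫ := by
      rw [map_sub, inner_sub_left, inner_sub_right]; ring
    have hb1 : |⟪B (x - y), x⟫| ≤ ‖B‖ * ‖x - y‖ * ‖x‖ := by
      calc |⟪B (x - y), x⟫| ≤ ‖B (x - y)‖ * ‖x‖ := abs_real_inner_le_norm _ _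
        _ ≤ ‖B‖ * ‖x - y‖ * ‖x‖ := by
            apply mul_le_mul_of_nonneg_right (B.le_opNorm _) (norm_nonneg _)
    have hb2 : |⟪B y, x - y⟫| ≤ ‖B‖ * ‖y‖ * ‖x - y‖ := by
      calc |⟪B y, x - y⟫| ≤ ‖B y‖ * ‖x - y‖ := abs_real_inner_le_norm _ _
        _ ≤ ‖B‖ * ‖y‖ * ‖x - y‖ := by
            apply mul_le_mul_of_nonneg_right (B.le_opNorm _) (norm_nonneg _)
    have htriv : |⟪B x, x⟫| ≤ |⟪B y, y⟫| + |⟪B x, x⟫ - ⟪B y, y⟫| := by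
      have := abs_sub_abs_le_abs_sub (⟪B x, x⟫) (⟪B y, y⟫)
      linarith [abs_sub_comm (⟪B x, x⟫) (⟪B y, y⟫)]
    have habs : |⟪B x, x⟫ - ⟪B y, y⟫| ≤ ‖B‖ * ‖x - y‖ * ‖x‖ + ‖B‖ * ‖y‖ * ‖x - y‖ := by
      rw [hsplit]
      exact (abs_add_le _ _).trans (add_le_add hb1 hb2)
    have hfin : ‖B‖ * ‖x - y‖ * ‖x‖ + ‖B‖ * ‖y‖ * ‖x - y‖ ≤ D := by
      have hxy0 : 0 ≤ ‖x - y‖ := norm_nonneg _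
      have hmm1 : ‖x - y‖ * ‖x‖ ≤ (‖B‖ * ‖z 0‖ * (Real.sqrt T * E)) * ‖z 0‖ :=
        mul_le_mul hxy hxn (norm_nonneg x) (by positivity)
      have hmm2 : ‖y‖ * ‖x - y‖ ≤ ‖z 0‖ * (‖B‖ * ‖z 0‖ * (Real.sqrt T * E)) :=
        mul_le_mul hyn hxy hxy0 hR0
      have h1 : ‖B‖ * ‖x - y‖ * ‖x‖ ≤ ‖B‖ * ((‖B‖ * ‖z 0‖ * (Real.sqrt T * E)) * ‖z 0‖) :=
        calc ‖B‖ * ‖x - y‖ * ‖x‖ = ‖B‖ * (‖x - y‖ * ‖x‖) := by ring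
          _ ≤ ‖B‖ * ((‖B‖ * ‖z 0‖ * (Real.sqrt T * E)) * ‖z 0‖) :=
              mul_le_mul_of_nonneg_left hmm1 hB0
      have h2 : ‖B‖ * ‖y‖ * ‖x - y‖ ≤ ‖B‖ * (‖z 0‖ * (‖B‖ * ‖z 0‖ * (Real.sqrt T * E))) :=
        calc ‖B‖ * ‖y‖ * ‖x - y‖ = ‖B‖ * (‖y‖ * ‖x - y‖) := by ring
          _ ≤ ‖B‖ * (‖z 0‖ * (‖B‖ * ‖z 0‖ * (Real.sqrt T * E))) :=
              mul_le_mul_of_nonneg_left hmm2 hB0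
      have hsum : ‖B‖ * ((‖B‖ * ‖z 0‖ * (Real.sqrt T * E)) * ‖z 0‖)
          + ‖B‖ * (‖z 0‖ * (‖B‖ * ‖z 0‖ * (Real.sqrt T * E))) = D := by
        rw [hD]; ring
      linarith
    have hyc : ⟪B y, y⟫ = ⟪y, B y⟫ := real_inner_comm _ _
    have habs' : |⟪B y, y⟫| = |⟪y, B y⟫| := by rw [hyc]
    show |⟪B x, x⟫| ≤ |⟪y, B y⟫| + D
    linarith
  by_cases hLI : IntervalIntegrable (fun s => |⟪B (S s (z t)), S s (z t)⟫|) volume 0 T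
  · have hg_int : IntervalIntegrable (fun s => |⟪z (t + s), B (z (t + s))⟫| + D) volume 0 T := by
      apply IntervalIntegrable.add _ intervalIntegrable_const
      exact (((bs_c_cont B z hzc).comp (continuous_const.add continuous_id)).abs).intervalIntegrable 0 T
    have h1 := intervalIntegral.integral_mono_on (le_of_lt hT) hLI hg_int hpt
    have h2 : (∫ s in (0:ℝ)..T, (|⟪z (t + s), B (z (t + s))⟫| + D))
        = (∫ σ in t..t + T, |⟪z σ, B (z σ)⟫|) + T * D := by
      rw [intervalIntegral.integral_add _ intervalIntegrable_const]
      · congr 1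
        · have e1 : (fun s => |⟪z (t + s), B (z (t + s))⟫|)
              = fun s => (fun u => |⟪z u, B (z u)⟫|) (s + t) := by
            funext s; rw [add_comm]
          rw [e1, intervalIntegral.integral_comp_add_right (fun u => |⟪z u, B (z u)⟫|) t,
            zero_add, add_comm T t]
        · rw [intervalIntegral.integral_const, smul_eq_mul, sub_zero]
      · exact (((bs_c_cont B z hzc).comp (continuous_const.add continuous_id)).abs).intervalIntegrable 0 T
    have h32 : T ^ ((3:ℝ)/2) = T * Real.sqrt T := by
      rw [show (3:ℝ)/2 = 1 + 1/2 by norm_num, Real.rpow_add hT, Real.rpow_one,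
        ← Real.sqrt_eq_rpow]
    have h12 : T ^ ((1:ℝ)/2) = Real.sqrt T := by
      rw [← Real.sqrt_eq_rpow]
    have hKE : (2 * T ^ ((3:ℝ)/2) * ‖B‖ ^ 2 * ‖z 0‖ ^ 2 + T ^ ((1:ℝ)/2)) * E
        = Real.sqrt T * E + T * D := by
      rw [h32, h12, hD]; ring
    rw [hKE]
    rw [h2] at h1
    linarith
  · rw [intervalIntegral.integral_undef hLI]
    have hK : 0 ≤ 2 * T ^ ((3:ℝ)/2) * ‖B‖ ^ 2 * ‖z 0‖ ^ 2 + T ^ ((1:ℝ)/2) := by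
      have := Real.rpow_nonneg (le_of_lt hT) ((3:ℝ)/2)
      have := Real.rpow_nonneg (le_of_lt hT) ((1:ℝ)/2)
      positivity
    exact mul_nonneg hK hE0
end
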